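/- arXiv:1701.00325 — 12 statements merged into one kernel-verified Lean document; each statement's English description precedes it below -/
import Mathlib

section
/- Let p be a prime with p ≥ 5, let h and r be natural numbers, and let m : Fin r → ℕ satisfy m i ≥ p for all i. If the rational number S = 2h − 2 + ∑ i, (1 − 1/(m i)) satisfies 0 < S ≤ 1 − 3/p, then h = 0, r = 3, and m i = p for all i. -/
/-!
Each period contributes `1 - 1/mᵢ ∈ [1 - 1/p, 1)`, so `2h - 2 + r(1 - 1/p) ≤ S ≤ 2h - 2 + r`.
Together with `0 < S ≤ 1 - 3/p` this gives `2h + r ≥ 3` and `p(2h + r - 3) ≤ r - 3`, which for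
`p ≥ 2` leaves only `h = 0`, `r = 3`. Then `S ≤ 1 - 3/p` says that the sum of the three
contributions reaches its lower bound `3(1 - 1/p)`, so every period equals `p`.
-/

section PeriodSums

variable {K : Type*} [Field K] [LinearOrder K] [IsStrictOrderedRing K] {ι : Type*}
  (s : Finset ι) {m : ι → ℕ} {p : ℕ}

theorem sum_one_sub_inv_le_card :
    ∑ i ∈ s, (1 - 1 / (m i : K)) ≤ s.card := by
  simpa using Finset.sum_le_sum fun i (_ : i ∈ s) =>
    sub_le_self (1 : K) (one_div_nonneg.mpr (Nat.cast_nonneg (m i)))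

theorem one_sub_inv_le_one_sub_inv (hp : 0 < p) {n : ℕ} (hn : p ≤ n) :
    1 - 1 / (p : K) ≤ 1 - 1 / (n : K) :=
  sub_le_sub_left (one_div_le_one_div_of_le (by exact_mod_cast hp) (by exact_mod_cast hn)) 1

theorem card_mul_one_sub_inv_le_sum (hp : 0 < p) (hm : ∀ i ∈ s, p ≤ m i) :
    s.card * (1 - 1 / (p : K)) ≤ ∑ i ∈ s, (1 - 1 / (m i : K)) := by
  rw [← nsmul_eq_mul, ← Finset.sum_const]
  exact Finset.sum_le_sum fun i hi => one_sub_inv_le_one_sub_inv hp (hm i hi)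

theorem eq_of_sum_one_sub_inv_le_card_mul (hp : 0 < p) (hm : ∀ i ∈ s, p ≤ m i)
    (hsum : ∑ i ∈ s, (1 - 1 / (m i : K)) ≤ s.card * (1 - 1 / (p : K))) :
    ∀ i ∈ s, m i = p := by
  have hsum_eq : ∑ _i ∈ s, (1 - 1 / (p : K)) = ∑ i ∈ s, (1 - 1 / (m i : K)) := by
    rw [Finset.sum_const, nsmul_eq_mul]
    exact le_antisymm (card_mul_one_sub_inv_le_sum s hp hm) hsum
  intro i hi
  have hterm := (Finset.sum_eq_sum_iff_of_le fun i hi =>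
    one_sub_inv_le_one_sub_inv (K := K) hp (hm i hi)).mp hsum_eq i hi
  rw [sub_right_inj, one_div, one_div, inv_inj, Nat.cast_inj] at hterm
  exact hterm.symm

end PeriodSums

theorem dyck_signature_ppp_general (p : ℕ) (hp5 : 5 ≤ p)
    (h r : ℕ) (m : Fin r → ℕ) (hm : ∀ i, p ≤ m i)
    (S : ℚ) (hS : S = 2 * (h : ℚ) - 2 + ∑ i, (1 - 1 / (m i : ℚ)))
    (hpos : 0 < S) (hle : S ≤ 1 - 3 / (p : ℚ)) :
    h = 0 ∧ r = 3 ∧ ∀ i, m i = p := by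
  have hp : 0 < p := by omega
  have hpq : (5 : ℚ) ≤ p := by exact_mod_cast hp5
  have hlo := card_mul_one_sub_inv_le_sum (K := ℚ) Finset.univ hp fun i _ => hm i
  have hhi := sum_one_sub_inv_le_card (K := ℚ) (m := m) Finset.univ
  simp only [Finset.card_univ, Fintype.card_fin] at hlo hhi
  obtain ⟨rfl, rfl⟩ : h = 0 ∧ r = 3 := by
    have h3 : (3 : ℚ) ≤ 2 * h + r := by
      have : 2 < 2 * h + r := by exact_mod_cast (by linarith : (2 : ℚ) < 2 * h + r)
      exact_mod_cast this
    have hdrop : (p : ℚ) * (2 * h + r - 3) ≤ r - 3 := by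
      have hbound : 2 * h - 2 + r * (1 - 1 / (p : ℚ)) ≤ 1 - 3 / p := by linarith
      field_simp at hbound
      linarith
    have hh : (h : ℚ) = 0 := by nlinarith
    have hr : (r : ℚ) = 3 := by nlinarith
    exact ⟨by exact_mod_cast hh, by exact_mod_cast hr⟩
  refine ⟨rfl, rfl, fun i => eq_of_sum_one_sub_inv_le_card_mul (K := ℚ) Finset.univ hp
    (fun i _ => hm i) ?_ i (Finset.mem_univ i)⟩
  simp only [Finset.card_univ, Fintype.card_fin, Nat.cast_ofNat]
  linarith [show (3 : ℚ) * (1 - 1 / p) = 1 - 3 / p + 2 by ring]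

/-- Signature computation for Theorem 4.2: if all periods `m i` are at least `p ≥ 5`
and `S = 2h - 2 + ∑ i, (1 - 1/(m i))` satisfies `0 < S ≤ 1 - 3/p`, then the signature
is that of the triangle group `Γ(0; p, p, p)`. -/
theorem dyck_signature_ppp (p : ℕ) (hp : p.Prime) (hp5 : 5 ≤ p)
    (h r : ℕ) (m : Fin r → ℕ) (hm : ∀ i, p ≤ m i)
    (S : ℚ) (hS : S = 2 * (h : ℚ) - 2 + ∑ i, (1 - 1 / (m i : ℚ)))
    (hpos : 0 < S) (hle : S ≤ 1 - 3 / (p : ℚ)) :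
    h = 0 ∧ r = 3 ∧ ∀ i, m i = p :=
  dyck_signature_ppp_general p hp5 h r m hm S hS hpos hle
end

section
/- Let p be a prime with p ≥ 5 and let G be a finite supersolvable group that is a quotient of the von Dyck group D(p,p,p). Then every prime q dividing |G| satisfies q = p or q ≡ 1 (mod p). -/
/-!
The generators `x, y` of `D(p,p,p)` have order dividing `p`, so `G` and all its quotients are
generated by elements of order dividing `p`; hence any nontrivial homomorphism from such a group to
a finite group `H` forces `p ∣ |H|`. Induct on `|G|`. A finite supersolvable group has a normal
subgroup `⟨z⟩` of prime order `r`, and the prime divisors of `|G|` are `r` and those of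
`|G / ⟨z⟩|`. If `z` is not central, conjugation is a nontrivial map `G → Aut ⟨z⟩ ≅ (ℤ/r)ˣ`, so
`p ∣ r - 1`. If `z` is central and `r ∤ [G : ⟨z⟩]`, the transfer `G → ⟨z⟩` is
`g ↦ g ^ [G : ⟨z⟩]`, which is nontrivial, so `p ∣ r`, i.e. `r = p`. Otherwise `r` divides
`|G / ⟨z⟩|` and induction applies.
-/

/-- The von Dyck group `D(a,b,c) = ⟨x, y ∣ x^a = y^b = (xy)^c = 1⟩`. -/
def dyckRels (a b c : ℕ) : Set (FreeGroup (Fin 2)) :=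
  {FreeGroup.of 0 ^ a, FreeGroup.of 1 ^ b, (FreeGroup.of 0 * FreeGroup.of 1) ^ c}

abbrev DyckGroup (a b c : ℕ) : Type := PresentedGroup (dyckRels a b c)

/-- A group is supersolvable if it has a finite chain of subgroups, each normal in the
whole group, with cyclic successive quotients (`H (i+1) / H i` is cyclic iff
`H (i+1) = H i ⊔ ⟨x⟩` for some `x ∈ H (i+1)`). -/
def IsSupersolvable (G : Type*) [Group G] : Prop :=
  ∃ (n : ℕ) (H : ℕ → Subgroup G),
    H 0 = ⊥ ∧ H n = ⊤ ∧ (∀ i, (H i).Normal) ∧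
    ∀ i < n, H i ≤ H (i + 1) ∧
      ∃ x ∈ H (i + 1), H (i + 1) = H i ⊔ Subgroup.closure {x}

open Subgroup

theorem Subgroup.Normal.zpowers_pow {G : Type*} [Group G] {x : G} (hx : (zpowers x).Normal)
    (n : ℕ) : (zpowers (x ^ n)).Normal := by
  refine ⟨fun y hy g => ?_⟩
  obtain ⟨j, rfl⟩ := mem_zpowers_iff.mp hy
  obtain ⟨t, ht⟩ := mem_zpowers_iff.mp (hx.conj_mem x (mem_zpowers x) g)
  have hconj : g * x ^ n * g⁻¹ = (x ^ n) ^ t := by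
    rw [← conj_pow, ← ht, ← zpow_natCast, ← zpow_natCast, ← zpow_mul, ← zpow_mul, mul_comm]
  rw [← conj_zpow, hconj]
  exact zpow_mem (zpow_mem (mem_zpowers _) t) j

theorem exists_prime_orderOf_normal_zpowers_of_ne_one {G : Type*} [Group G] [Finite G] {x : G}
    (hx : x ≠ 1) (hN : (zpowers x).Normal) :
    ∃ z : G, (orderOf z).Prime ∧ (zpowers z).Normal := by
  obtain ⟨r, hr, hrx⟩ := Nat.exists_prime_and_dvd (mt orderOf_eq_one_iff.mp hx)
  exact ⟨x ^ (orderOf x / r), (orderOf_pow_orderOf_div (orderOf_pos x).ne' hrx).symm ▸ hr,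
    hN.zpowers_pow _⟩

namespace IsSupersolvable

variable {G H : Type*} [Group G] [Group H]

theorem of_surjective (hG : IsSupersolvable G) (f : G →* H) (hf : Function.Surjective f) :
    IsSupersolvable H := by
  obtain ⟨n, C, h0, hn, hnorm, hstep⟩ := hG
  refine ⟨n, fun i => (C i).map f, by simp [h0], by simp [hn, map_top_of_surjective f hf],
    fun i => (hnorm i).map f hf, fun i hi => ?_⟩
  obtain ⟨hle, x, hx, hC⟩ := hstep i hi
  refine ⟨map_mono hle, f x, mem_map_of_mem f hx, ?_⟩
  change (C (i + 1)).map f = (C i).map f ⊔ _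
  rw [hC, Subgroup.map_sup, MonoidHom.map_closure, Set.image_singleton]

theorem exists_prime_orderOf_normal_zpowers [Finite G] [Nontrivial G] (hG : IsSupersolvable G) :
    ∃ z : G, (orderOf z).Prime ∧ (zpowers z).Normal := by
  obtain ⟨n, C, h0, hn, hnorm, hstep⟩ := hG
  have key : ∀ i ≤ n, C i = ⊥ ∨ ∃ z : G, (orderOf z).Prime ∧ (zpowers z).Normal := by
    intro i
    induction i with
    | zero => exact fun _ => Or.inl h0
    | succ i ih =>
      intro hi
      refine (ih (Nat.le_of_succ_le hi)).elim (fun hbot => ?_) Or.inr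
      obtain ⟨-, x, -, hC⟩ := hstep i hi
      rw [hbot, bot_sup_eq, ← zpowers_eq_closure] at hC
      by_cases hx : x = 1
      · exact Or.inl (by rw [hC, hx, zpowers_one_eq_bot])
      · exact Or.inr (exists_prime_orderOf_normal_zpowers_of_ne_one hx (hC ▸ hnorm (i + 1)))
  exact (key n le_rfl).resolve_left (hn ▸ top_ne_bot)

end IsSupersolvable

section GeneratedByPowEqOne

variable {G H : Type*} [Group G] [Group H] {p : ℕ}

theorem closure_setOf_pow_eq_one_eq_top_of_surjective
    (hG : closure {g : G | g ^ p = 1} = ⊤) (f : G →* H) (hf : Function.Surjective f) :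
    closure {h : H | h ^ p = 1} = ⊤ := by
  rw [eq_top_iff, ← map_top_of_surjective f hf, ← hG, MonoidHom.map_closure]
  exact closure_mono (by rintro _ ⟨g, hg, rfl⟩; simp [← map_pow, hg.out])

theorem prime_dvd_card_of_ne_one [Finite H] (hp : p.Prime)
    (hG : closure {g : G | g ^ p = 1} = ⊤) {φ : G →* H} (hφ : φ ≠ 1) : p ∣ Nat.card H := by
  have : Fact p.Prime := ⟨hp⟩
  obtain ⟨g, hg, hφg⟩ : ∃ g : G, g ^ p = 1 ∧ φ g ≠ 1 := by
    by_contra! h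
    refine hφ (MonoidHom.ker_eq_top_iff.mp (eq_top_iff.mpr ?_))
    exact hG ▸ (closure_le _).mpr h
  exact orderOf_eq_prime (by rw [← map_pow, hg, map_one]) hφg ▸ orderOf_dvd_natCard (φ g)

theorem dvd_orderOf_sub_one_of_notMem_center [Finite G] (hp : p.Prime)
    (hG : closure {g : G | g ^ p = 1} = ⊤) {z : G} (hz : (orderOf z).Prime)
    [(zpowers z).Normal] (hzc : z ∉ center G) : p ∣ orderOf z - 1 := by
  have hconj : MulAut.conjNormal (H := zpowers z) ≠ 1 := by
    refine fun h => hzc (mem_center_iff.mpr fun g => ?_)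
    have := congrArg Subtype.val (DFunLike.congr_fun (DFunLike.congr_fun h g) ⟨z, mem_zpowers z⟩)
    rw [MulAut.conjNormal_apply] at this
    simpa [mul_inv_eq_iff_eq_mul] using this
  have := prime_dvd_card_of_ne_one hp hG hconj
  rwa [IsCyclic.card_mulAut, Nat.card_zpowers, Nat.totient_prime hz] at this

open scoped IsMulCommutative in
theorem orderOf_eq_of_mem_center [Finite G] (hp : p.Prime)
    (hG : closure {g : G | g ^ p = 1} = ⊤) {z : G} (hz : (orderOf z).Prime)
    (hzc : z ∈ center G) (hidx : ¬orderOf z ∣ (zpowers z).index) : orderOf z = p := by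
  -- For central `z` the transfer `G → ⟨z⟩` is `g ↦ g ^ [G : ⟨z⟩]`, nontrivial on `z` itself.
  have hφ : MonoidHom.transfer (MonoidHom.id (zpowers z)) ≠ 1 := by
    intro h
    have := MonoidHom.transfer_eq_pow (MonoidHom.id (zpowers z)) z fun k g _ => by
      rw [mul_assoc, ← mem_center_iff.mp (pow_mem hzc k) g, inv_mul_cancel_left]
    rw [h] at this
    exact hidx (orderOf_dvd_of_pow_eq_one (congrArg Subtype.val this).symm)
  have := prime_dvd_card_of_ne_one hp hG hφ
  rw [Nat.card_zpowers] at this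
  exact ((Nat.prime_dvd_prime_iff_eq hp hz).mp this).symm

theorem IsSupersolvable.prime_dvd_card_eq_or_dvd_sub_one [Finite G] (hp : p.Prime)
    (hss : IsSupersolvable G) (hG : closure {g : G | g ^ p = 1} = ⊤) {q : ℕ} (hq : q.Prime)
    (hqG : q ∣ Nat.card G) : q = p ∨ p ∣ q - 1 := by
  induction hn : Nat.card G using Nat.strong_induction_on generalizing G q with
  | _ n ih =>
  have : Nontrivial G := Finite.one_lt_card_iff_nontrivial.mp <|
    lt_of_le_of_ne Nat.card_pos fun h => hq.ne_one (Nat.dvd_one.mp (h ▸ hqG))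
  obtain ⟨z, hz, hN⟩ := hss.exists_prime_orderOf_normal_zpowers
  have hcard : Nat.card G = (zpowers z).index * orderOf z := by
    rw [← index_mul_card (zpowers z), Nat.card_zpowers]
  have hlt : (zpowers z).index < n :=
    hn ▸ hcard ▸ lt_mul_of_one_lt_right (Nat.pos_of_ne_zero index_ne_zero_of_finite) hz.one_lt
  have ih_quot {q : ℕ} (hq : q.Prime) (hqM : q ∣ (zpowers z).index) : q = p ∨ p ∣ q - 1 :=
    ih _ hlt (hss.of_surjective _ (QuotientGroup.mk'_surjective _))
      (closure_setOf_pow_eq_one_eq_top_of_surjective hG _ (QuotientGroup.mk'_surjective _))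
      hq hqM rfl
  have hz_cases : orderOf z = p ∨ p ∣ orderOf z - 1 := by
    by_cases hidx : orderOf z ∣ (zpowers z).index
    · exact ih_quot hz hidx
    by_cases hzc : z ∈ center G
    · exact Or.inl (orderOf_eq_of_mem_center hp hG hz hzc hidx)
    · exact Or.inr (dvd_orderOf_sub_one_of_notMem_center hp hG hz hzc)
  rcases (Nat.Prime.dvd_mul hq).mp (hcard ▸ hqG) with hqM | hqz
  · exact ih_quot hq hqM
  · rwa [(Nat.prime_dvd_prime_iff_eq hq hz).mp hqz]

end GeneratedByPowEqOne

theorem DyckGroup.closure_setOf_pow_eq_one (p c : ℕ) :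
    closure {g : DyckGroup p p c | g ^ p = 1} = ⊤ := by
  rw [eq_top_iff, ← PresentedGroup.closure_range_of]
  refine closure_mono ?_
  rintro _ ⟨i, rfl⟩
  show PresentedGroup.mk _ (FreeGroup.of i) ^ p = 1
  rw [← map_pow]
  exact PresentedGroup.one_of_mem (by fin_cases i <;> simp [dyckRels])

theorem supersolvable_dyck_ppp_prime_divisors_general (p : ℕ) (hp : p.Prime)
    (G : Type*) [Group G] [Finite G] (hss : IsSupersolvable G)
    (f : DyckGroup p p p →* G) (hf : Function.Surjective f) :
    ∀ q : ℕ, q.Prime → q ∣ Nat.card G → q = p ∨ q ≡ 1 [MOD p] := by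
  intro q hq hqG
  have hG := closure_setOf_pow_eq_one_eq_top_of_surjective
    (DyckGroup.closure_setOf_pow_eq_one p p) f hf
  exact (hss.prime_dvd_card_eq_or_dvd_sub_one hp hG hq hqG).imp_right
    fun h => ((Nat.modEq_iff_dvd' hq.one_lt.le).mpr h).symm

/-- Proposition 4.4(a): if `p ≥ 5` is prime and `G` is a finite supersolvable quotient of
the von Dyck group `D(p,p,p)`, then every prime `q` dividing `|G|` satisfies `q = p` or
`q ≡ 1 (mod p)`. -/
theorem supersolvable_dyck_ppp_prime_divisors (p : ℕ) (hp : p.Prime) (hp5 : 5 ≤ p)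
    (G : Type*) [Group G] [Finite G] (hss : IsSupersolvable G)
    (f : DyckGroup p p p →* G) (hf : Function.Surjective f) :
    ∀ q : ℕ, q.Prime → q ∣ Nat.card G → q = p ∨ q ≡ 1 [MOD p] :=
  supersolvable_dyck_ppp_prime_divisors_general p hp G hss f hf
end

section
/- Let p be a prime with p ≥ 5 and let G be a nontrivial finite nilpotent group that is a quotient of the von Dyck group D(p,p,p). Then G is a p-group. -/
/-- Proposition 4.4(b): if `p ≥ 5` is prime and `G` is a nontrivial finite nilpotent
quotient of the von Dyck group `D(p,p,p)`, then `G` is a `p`-group. -/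
theorem nilpotent_dyck_ppp_is_pGroup (p : ℕ) (hp : p.Prime) (hp5 : 5 ≤ p)
    (G : Type*) [Group G] [Finite G] (hG : Nontrivial G) (hnil : Group.IsNilpotent G)
    (f : DyckGroup p p p →* G) (hf : Function.Surjective f) :
    IsPGroup p G := by
  haveI : Fact p.Prime := ⟨hp⟩
  -- the Sylow p-subgroup is normal since G is nilpotent
  obtain ⟨P⟩ : Nonempty (Sylow p G) := inferInstance
  haveI hPn : (P : Subgroup G).Normal := by
    have h := (isNilpotent_of_finite_tfae (G := G)).out 0 3
    exact h.mp hnil p ⟨hp⟩ P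
  -- the quotient map
  let π : G →* G ⧸ (P : Subgroup G) := QuotientGroup.mk' _
  let φ : DyckGroup p p p →* G ⧸ (P : Subgroup G) := π.comp f
  have hφ : Function.Surjective φ := (QuotientGroup.mk'_surjective _).comp hf
  -- generators of the Dyck group have p-th power 1
  have hrel : ∀ i : Fin 2, (PresentedGroup.of (rels := dyckRels p p p) i) ^ p = 1 := by
    intro i
    have hmem : FreeGroup.of i ^ p ∈ dyckRels p p p := by
      fin_cases i
      · exact Or.inl rfl
      · exact Or.inr (Or.inl rfl)
    have : (PresentedGroup.mk (dyckRels p p p) (FreeGroup.of i ^ p)) = 1 :=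
      (QuotientGroup.eq_one_iff _).mpr (Subgroup.subset_normalClosure hmem)
    simpa [PresentedGroup.of, ← map_pow] using this
  -- images of generators in the quotient are trivial
  have hgen1 : ∀ i : Fin 2, φ (PresentedGroup.of i) = 1 := by
    intro i
    set g := φ (PresentedGroup.of i) with hg
    have hgp : g ^ p = 1 := by rw [hg, ← map_pow, hrel i, map_one]
    have hord : orderOf g ∣ p := orderOf_dvd_of_pow_eq_one hgp
    have hcard : orderOf g ∣ Nat.card (G ⧸ (P : Subgroup G)) := orderOf_dvd_natCard g
    rw [show Nat.card (G ⧸ (P : Subgroup G)) = (P : Subgroup G).index from rfl] at hcard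
    have hnp : ¬ p ∣ (P : Subgroup G).index := P.not_dvd_index
    rcases (Nat.Prime.eq_one_or_self_of_dvd hp _ hord) with h1 | h1
    · exact orderOf_eq_one_iff.mp h1
    · rw [h1] at hcard; exact absurd hcard hnp
  -- hence the quotient is trivial
  have htop : (⊤ : Subgroup (G ⧸ (P : Subgroup G))) = ⊥ := by
    have h1 : Subgroup.closure (Set.range fun i : Fin 2 => φ (PresentedGroup.of i)) = ⊤ := by
      have := PresentedGroup.closure_range_of (dyckRels p p p)
      calc Subgroup.closure (Set.range fun i : Fin 2 => φ (PresentedGroup.of i))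
          = Subgroup.map φ (Subgroup.closure (Set.range PresentedGroup.of)) := by
            rw [MonoidHom.map_closure, ← Set.range_comp]; rfl
        _ = ⊤ := by rw [this, Subgroup.map_top_of_surjective φ hφ]
    have h2 : (Set.range fun i : Fin 2 => φ (PresentedGroup.of i)) ⊆ {1} := by
      rintro x ⟨i, rfl⟩; exact hgen1 i
    have := Subgroup.closure_mono h2
    rw [h1, Subgroup.closure_singleton_one] at this
    exact le_bot_iff.mp this
  have hall : ∀ x : G ⧸ (P : Subgroup G), x = 1 := fun x =>
    Subgroup.mem_bot.mp (htop ▸ Subgroup.mem_top x)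
  have hidx : (P : Subgroup G).index = 1 := by
    rw [Subgroup.index, Nat.card_eq_one_iff_unique]
    exact ⟨⟨fun a b => (hall a).trans (hall b).symm⟩, ⟨1⟩⟩
  have hPtop : (P : Subgroup G) = ⊤ := Subgroup.index_eq_one.mp hidx
  have : IsPGroup p (P : Subgroup G) := P.isPGroup'
  rw [hPtop] at this
  exact this.of_equiv Subgroup.topEquiv
end

section
/- Let G be a nontrivial finite supersolvable group of odd order that is a quotient of the von Dyck group D(3,3,7). Then |G| = 3·7^n for some natural number n. -/
/-!
Induct on `|G|`. A supersolvable group has a nontrivial cyclic normal subgroup `N`, and `G ⧸ N`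
is again a supersolvable quotient of `D(3,3,7)`, so `|G ⧸ N| ∣ 3 * 7 ^ m`. Conjugation maps `G`
to the abelian group `MulAut N`; in an abelian quotient of `D(3,3,7)` the image of `xy` has order
dividing both `3` and `7`, so the quotient is generated by the image of `x` and has exponent `3`.
Hence a Sylow `7`-subgroup `P` centralizes `N`, so `N` normalizes `P` and the number of Sylow
`7`-subgroups divides `|G ⧸ N|`; being `≡ 1 [MOD 7]`, it is `1`. Now `G ⧸ P` is a quotient of
`D(3,3,7)` of order prime to `7`, so again `xy ↦ 1` and `|G ⧸ P| ∣ 3`. Finally `|G| = 7 ^ k` is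
impossible for nontrivial `G`, as `x` and `y` would both map to `1`.
-/

theorem IsCyclic.commute_mulAut {H : Type*} [Group H] [IsCyclic H] (σ τ : MulAut H) :
    Commute σ τ :=
  (IsCyclic.mulAutMulEquiv H).injective (by rw [map_mul, map_mul, mul_comm])

namespace IsSupersolvable

variable {G : Type*} [Group G]

theorem of_surjective_s6 {Q : Type*} [Group Q] (h : IsSupersolvable G) (π : G →* Q)
    (hπ : Function.Surjective π) : IsSupersolvable Q := by
  obtain ⟨n, H, hbot, htop, hnorm, hstep⟩ := h
  refine ⟨n, fun i => (H i).map π, by dsimp only; rw [hbot, Subgroup.map_bot], ?_,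
    fun i => (hnorm i).map π hπ, fun i hi => ?_⟩
  · dsimp only
    rw [htop, ← MonoidHom.range_eq_map, MonoidHom.range_eq_top.mpr hπ]
  · obtain ⟨hle, x, hx, hsup⟩ := hstep i hi
    refine ⟨Subgroup.map_mono hle, π x, Subgroup.mem_map_of_mem π hx, ?_⟩
    dsimp only
    rw [hsup, Subgroup.map_sup, MonoidHom.map_closure, Set.image_singleton]

theorem exists_normal_isCyclic_ne_bot [Nontrivial G] (h : IsSupersolvable G) :
    ∃ N : Subgroup G, N.Normal ∧ IsCyclic N ∧ N ≠ ⊥ := by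
  obtain ⟨n, H, hbot, htop, hnorm, hstep⟩ := h
  by_contra! hcyc
  have hH : ∀ i ≤ n, H i = ⊥ := by
    intro i hi
    induction i with
    | zero => exact hbot
    | succ i ih =>
      obtain ⟨-, x, -, hx⟩ := hstep i hi
      have hzx : H (i + 1) = Subgroup.zpowers x := by
        rw [hx, ih (by omega), bot_sup_eq, Subgroup.zpowers_eq_closure]
      exact hcyc _ (hnorm _) (by rw [hzx]; infer_instance)
  exact bot_ne_top ((hH n le_rfl).symm.trans htop)

end IsSupersolvable

theorem Nat.eq_one_of_modEq_one_of_dvd_three_mul_seven_pow {k m : ℕ} (hmod : k ≡ 1 [MOD 7])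
    (h : k ∣ 3 * 7 ^ m) : k = 1 := by
  have hcop : k.Coprime (7 ^ m) := Nat.Coprime.pow_right _ (hmod.gcd_eq.trans (by norm_num))
  rcases (Nat.dvd_prime Nat.prime_three).mp (hcop.dvd_of_dvd_mul_right h) with rfl | rfl
  · rfl
  · exact absurd hmod (by decide)

namespace DyckGroup

variable {a b c : ℕ} {G : Type*} [Group G]

theorem of_zero_pow : (PresentedGroup.of 0 : DyckGroup a b c) ^ a = 1 :=
  (map_pow (PresentedGroup.mk _) _ _).symm.trans (PresentedGroup.one_of_mem (by simp [dyckRels]))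

theorem of_one_pow : (PresentedGroup.of 1 : DyckGroup a b c) ^ b = 1 :=
  (map_pow (PresentedGroup.mk _) _ _).symm.trans (PresentedGroup.one_of_mem (by simp [dyckRels]))

theorem of_mul_of_pow : (PresentedGroup.of 0 * PresentedGroup.of 1 : DyckGroup a b c) ^ c = 1 :=
  (map_pow (PresentedGroup.mk _) _ _).symm.trans (PresentedGroup.one_of_mem (by simp [dyckRels]))

theorem closure_of_eq_top :
    Subgroup.closure {.of 0, .of 1} = (⊤ : Subgroup (DyckGroup a b c)) := by
  rw [← PresentedGroup.closure_range_of, Set.range]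
  congr 1
  ext
  simp [Fin.exists_fin_two, eq_comm (b := _)]

theorem range_le_zpowers_of_mul_eq_one (φ : DyckGroup a b c →* G)
    (h : φ (.of 0) * φ (.of 1) = 1) : φ.range ≤ Subgroup.zpowers (φ (.of 0)) := by
  rw [MonoidHom.range_eq_map, ← closure_of_eq_top, MonoidHom.map_closure, Set.image_pair,
    Subgroup.closure_le, Set.pair_subset_iff, eq_inv_of_mul_eq_one_right h]
  exact ⟨Subgroup.mem_zpowers _, Subgroup.inv_mem _ (Subgroup.mem_zpowers _)⟩

theorem pow_eq_one_of_mul_eq_one (φ : DyckGroup a b c →* G)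
    (h : φ (.of 0) * φ (.of 1) = 1) (g : DyckGroup a b c) : φ g ^ a = 1 := by
  obtain ⟨k, hk⟩ := Subgroup.mem_zpowers_iff.mp (range_le_zpowers_of_mul_eq_one φ h ⟨g, rfl⟩)
  rw [← hk, ← zpow_natCast, ← zpow_mul, mul_comm, zpow_mul, zpow_natCast, ← map_pow, of_zero_pow,
    map_one, one_zpow]

theorem mul_eq_one_of_commute (φ : DyckGroup a a c →* G) (hac : a.Coprime c)
    (h : Commute (φ (.of 0)) (φ (.of 1))) : φ (.of 0) * φ (.of 1) = 1 :=
  (pow_eq_one_iff_of_coprime hac).mp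
    ⟨by rw [h.mul_pow, ← map_pow, ← map_pow, of_zero_pow, of_one_pow, map_one, one_mul],
      by rw [← map_mul, ← map_pow, of_mul_of_pow, map_one]⟩

theorem card_dvd_of_coprime (f : DyckGroup a b c →* G) (hf : Function.Surjective f)
    (hc : c.Coprime (Nat.card G)) : Nat.card G ∣ a := by
  have hxy : f (.of 0) * f (.of 1) = 1 := (pow_eq_one_iff_of_coprime hc).mp
    ⟨by rw [← map_mul, ← map_pow, of_mul_of_pow, map_one], pow_card_eq_one'⟩
  have htop : Subgroup.zpowers (f (.of 0)) = ⊤ := by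
    rw [eq_top_iff, ← MonoidHom.range_eq_top.mpr hf]
    exact range_le_zpowers_of_mul_eq_one f hxy
  rw [← Subgroup.card_top, ← htop, Nat.card_zpowers]
  exact orderOf_dvd_of_pow_eq_one (by rw [← map_pow, of_zero_pow, map_one])

theorem subsingleton_of_coprime (f : DyckGroup a b c →* G) (hf : Function.Surjective f)
    (ha : a.Coprime (Nat.card G)) (hb : b.Coprime (Nat.card G)) : Subsingleton G := by
  have hx : f (.of 0) = 1 := (pow_eq_one_iff_of_coprime ha).mp
    ⟨by rw [← map_pow, of_zero_pow, map_one], pow_card_eq_one'⟩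
  have hy : f (.of 1) = 1 := (pow_eq_one_iff_of_coprime hb).mp
    ⟨by rw [← map_pow, of_one_pow, map_one], pow_card_eq_one'⟩
  refine subsingleton_of_forall_eq 1 fun g => ?_
  obtain ⟨d, rfl⟩ := hf g
  exact (pow_eq_one_iff_of_coprime ha).mp
    ⟨pow_eq_one_of_mul_eq_one f (by rw [hx, hy, one_mul]) d, pow_card_eq_one'⟩

theorem commute_of_coprime_orderOf (hac : a.Coprime c) (f : DyckGroup a a c →* G)
    (hf : Function.Surjective f) (N : Subgroup G) [N.Normal] [IsCyclic N] {g : G}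
    (hg : (orderOf g).Coprime a) {n : G} (hn : n ∈ N) : Commute g n := by
  let φ := (MulAut.conjNormal (H := N)).comp f
  have hφ : φ (.of 0) * φ (.of 1) = 1 :=
    mul_eq_one_of_commute φ hac (IsCyclic.commute_mulAut _ _)
  obtain ⟨d, rfl⟩ := hf g
  have hconj : MulAut.conjNormal (f d) = 1 := (pow_eq_one_iff_of_coprime hg).mp
    ⟨by rw [← map_pow, pow_orderOf_eq_one, map_one], pow_eq_one_of_mul_eq_one φ hφ d⟩
  have := congrArg (fun σ : MulAut N => (σ ⟨n, hn⟩ : G)) hconj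
  simp only [MulAut.conjNormal_apply, MulAut.one_apply] at this
  exact mul_inv_eq_iff_eq_mul.mp this

theorem card_sylow_dvd_index [Fact c.Prime] [Finite G] (hac : a.Coprime c)
    (f : DyckGroup a a c →* G) (hf : Function.Surjective f) (N : Subgroup G) [N.Normal]
    [IsCyclic N] : Nat.card (Sylow c G) ∣ N.index := by
  obtain ⟨P⟩ := Sylow.nonempty (p := c) (G := G)
  rw [P.card_eq_index_normalizer]
  refine Subgroup.index_dvd_of_le (le_trans ?_ (Subgroup.centralizer_le_normalizer _))
  intro n hn
  rw [Subgroup.mem_centralizer_iff]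
  intro g hg
  exact commute_of_coprime_orderOf hac f hf N
    (by simpa using P.isPGroup'.orderOf_coprime hac.symm ⟨g, hg⟩) hn

theorem card_dvd_of_normal_sylow [Fact c.Prime] [Finite G] (f : DyckGroup a b c →* G)
    (hf : Function.Surjective f) (P : Sylow c G) [(P : Subgroup G).Normal] :
    ∃ n, Nat.card G ∣ a * c ^ n := by
  obtain ⟨n, hn⟩ := P.isPGroup'.exists_card_eq
  refine ⟨n, ?_⟩
  rw [Subgroup.card_eq_card_quotient_mul_card_subgroup (P : Subgroup G), hn]
  refine mul_dvd_mul_right (card_dvd_of_coprime ((QuotientGroup.mk' _).comp f)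
    ((QuotientGroup.mk'_surjective _).comp hf) ?_) _
  rw [← Subgroup.index_eq_card]
  exact (Nat.Prime.coprime_iff_not_dvd Fact.out).mpr P.not_dvd_index

theorem card_dvd_three_mul_seven_pow [Finite G]
    (hss : IsSupersolvable G) (f : DyckGroup 3 3 7 →* G) (hf : Function.Surjective f) :
    ∃ n, Nat.card G ∣ 3 * 7 ^ n := by
  induction hk : Nat.card G using Nat.strong_induction_on generalizing G with
  | _ k ih =>
  subst hk
  rcases subsingleton_or_nontrivial G with hG | hG
  · exact ⟨0, by rw [Nat.card_of_subsingleton 1]; exact one_dvd _⟩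
  obtain ⟨N, hN, hNcyc, hNbot⟩ := hss.exists_normal_isCyclic_ne_bot
  have hlt : Nat.card (G ⧸ N) < Nat.card G := by
    rw [Subgroup.card_eq_card_quotient_mul_card_subgroup N]
    exact lt_mul_of_one_lt_right Nat.card_pos ((Subgroup.one_lt_card_iff_ne_bot N).mpr hNbot)
  obtain ⟨m, hm⟩ := ih _ hlt (hss.of_surjective_s6 _ (QuotientGroup.mk'_surjective N))
    ((QuotientGroup.mk' N).comp f) ((QuotientGroup.mk'_surjective N).comp hf) rfl
  have : Fact (Nat.Prime 7) := ⟨Nat.prime_seven⟩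
  have hsyl : Nat.card (Sylow 7 G) = 1 :=
    Nat.eq_one_of_modEq_one_of_dvd_three_mul_seven_pow (card_sylow_modEq_one 7 G)
      ((card_sylow_dvd_index (by norm_num) f hf N).trans hm)
  have : Subsingleton (Sylow 7 G) := (Nat.card_eq_one_iff_unique.mp hsyl).1
  obtain ⟨P⟩ := Sylow.nonempty (p := 7) (G := G)
  have := P.normal_of_subsingleton
  exact card_dvd_of_normal_sylow f hf P

end DyckGroup

theorem supersolvable_odd_dyck_337_order_general (G : Type*) [Group G] [Finite G]
    (hG : Nontrivial G) (hss : IsSupersolvable G)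
    (f : DyckGroup 3 3 7 →* G) (hf : Function.Surjective f) :
    ∃ n : ℕ, Nat.card G = 3 * 7 ^ n := by
  obtain ⟨n, hn⟩ := DyckGroup.card_dvd_three_mul_seven_pow hss f hf
  obtain ⟨d, e, hd, he, hde⟩ := Nat.dvd_mul.mp hn
  obtain ⟨k, -, rfl⟩ := (Nat.dvd_prime_pow Nat.prime_seven).mp he
  rcases (Nat.dvd_prime Nat.prime_three).mp hd with rfl | rfl
  · have h3 : Nat.Coprime 3 (Nat.card G) := by
      rw [← hde, one_mul]
      exact Nat.Coprime.pow_right _ (by norm_num)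
    have := DyckGroup.subsingleton_of_coprime f hf h3 h3
    exact absurd hG (not_nontrivial G)
  · exact ⟨k, hde.symm⟩

/-- Theorem 5.1 (core): a nontrivial finite supersolvable group of odd order that is a
quotient of the von Dyck group `D(3,3,7)` has order `3·7^n`. -/
theorem supersolvable_odd_dyck_337_order (G : Type*) [Group G] [Finite G]
    (hG : Nontrivial G) (hodd : Odd (Nat.card G)) (hss : IsSupersolvable G)
    (f : DyckGroup 3 3 7 →* G) (hf : Function.Surjective f) :
    ∃ n : ℕ, Nat.card G = 3 * 7 ^ n :=
  supersolvable_odd_dyck_337_order_general G hG hss f hf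
end

section
/- There is no finite supersolvable group of odd order whose order is divisible by 15 that is a quotient of the von Dyck group D(3,3,5). -/
lemma zmod5_cube : ∀ r : ZMod 5, r ^ 3 = 1 → r = 1 := by decide

lemma isSupersolvable_of_surjective {G Q : Type*} [Group G] [Group Q]
    (φ : G →* Q) (hφ : Function.Surjective φ) (h : IsSupersolvable G) :
    IsSupersolvable Q := by
  obtain ⟨n, H, h0, hn, hnorm, hstep⟩ := h
  refine ⟨n, fun i => (H i).map φ, by simp [h0],
    by show Subgroup.map φ (H n) = ⊤; rw [hn]; exact Subgroup.map_top_of_surjective φ hφ,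
    fun i => Subgroup.Normal.map (hnorm i) φ hφ, fun i hi => ?_⟩
  obtain ⟨hle, x, hx, hsup⟩ := hstep i hi
  refine ⟨Subgroup.map_mono hle, φ x, Subgroup.mem_map_of_mem φ hx, ?_⟩
  show Subgroup.map φ (H (i + 1)) = Subgroup.map φ (H i) ⊔ _
  rw [hsup, Subgroup.map_sup, MonoidHom.map_closure, Set.image_singleton]

/-- Main auxiliary lemma, by strong induction on the order of the group. -/
lemma aux_no_ss (n : ℕ) : ∀ (G : Type u) [Group G] [Finite G], Nat.card G = n →
    Odd n → 15 ∣ n →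
    (∃ a b : G, a ^ 3 = 1 ∧ b ^ 3 = 1 ∧ (a * b) ^ 5 = 1 ∧ Subgroup.closure {a, b} = ⊤) →
    ¬ IsSupersolvable G := by
  induction n using Nat.strong_induction_on with
  | _ n IH =>
  intro G _ _ hcard hodd hdvd hgen hss
  obtain ⟨a, b, ha, hb, hab, hgen⟩ := hgen
  subst hcard
  classical
  have hpos : 0 < Nat.card G := Nat.card_pos
  have h15le : 15 ≤ Nat.card G := Nat.le_of_dvd hpos hdvd
  have : Nontrivial G := Finite.one_lt_card_iff_nontrivial.mp (by omega)
  obtain ⟨nn, H, h0, hn, hnorm, hstep⟩ := hss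
  -- find the first nontrivial subgroup in the chain: it is cyclic, `zpowers x`
  have hPn : H nn ≠ ⊥ := by
    rw [hn]
    intro htb
    obtain ⟨g, hg1⟩ := exists_ne (1 : G)
    have hgmem : g ∈ (⊤ : Subgroup G) := Subgroup.mem_top g
    rw [htb, Subgroup.mem_bot] at hgmem
    exact hg1 hgmem
  have hex : ∃ i, H i ≠ ⊥ := ⟨nn, hPn⟩
  set i₀ := Nat.find hex with hi₀def
  have hi₀ : H i₀ ≠ ⊥ := Nat.find_spec hex
  have h1le : 1 ≤ i₀ := by
    rcases Nat.eq_zero_or_pos i₀ with h | h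
    · exact absurd (h ▸ h0) hi₀
    · exact h
  have hi₀n : i₀ ≤ nn := Nat.find_le hPn
  have hprev : H (i₀ - 1) = ⊥ := by
    have := Nat.find_min hex (show i₀ - 1 < i₀ by omega)
    exact not_not.mp this
  obtain ⟨-, x, hxmem, hsup⟩ := hstep (i₀ - 1) (by omega)
  rw [show i₀ - 1 + 1 = i₀ from by omega] at hxmem hsup
  have hHi₀ : H i₀ = Subgroup.zpowers x := by
    rw [hsup, hprev, bot_sup_eq, Subgroup.zpowers_eq_closure]
  have hx1 : x ≠ 1 := by
    intro h
    exact hi₀ (by rw [hHi₀, h, Subgroup.zpowers_one_eq_bot])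
  have hNnorm : (Subgroup.zpowers x).Normal := hHi₀ ▸ hnorm i₀
  -- a normal subgroup `M = zpowers y` of prime order `p`
  set m := orderOf x with hmdef
  have hm0 : m ≠ 0 := (orderOf_pos x).ne'
  have hm1 : m ≠ 1 := fun h => hx1 (orderOf_eq_one_iff.mp h)
  obtain ⟨p, hp, hpm⟩ := Nat.exists_prime_and_dvd hm1
  set y := x ^ (m / p) with hydef
  have hyord : orderOf y = p := orderOf_pow_orderOf_div hm0 hpm
  have hyN : y ∈ Subgroup.zpowers x := Subgroup.pow_mem _ (Subgroup.mem_zpowers x) _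
  have key : ∀ z : G, z ∈ Subgroup.zpowers x → z ^ p = 1 → z ∈ Subgroup.zpowers y := by
    intro z hz hzp
    obtain ⟨t, ht⟩ := Subgroup.mem_zpowers_iff.mp hz
    subst ht
    have hdvd1 : (m : ℤ) ∣ t * p := by
      rw [orderOf_dvd_iff_zpow_eq_one]
      rw [zpow_mul, zpow_natCast]
      exact hzp
    have hmp : (m : ℤ) = ((m / p : ℕ) : ℤ) * ((p : ℕ) : ℤ) := by
      exact_mod_cast (Nat.div_mul_cancel hpm).symm
    have hpz : ((p : ℕ) : ℤ) ≠ 0 := by exact_mod_cast hp.ne_zero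
    have hdvd2 : ((m / p : ℕ) : ℤ) ∣ t := by
      rw [hmp] at hdvd1
      exact (mul_dvd_mul_iff_right hpz).mp hdvd1
    obtain ⟨s, hs⟩ := hdvd2
    refine Subgroup.mem_zpowers_iff.mpr ⟨s, ?_⟩
    rw [hydef, ← zpow_natCast x (m / p), ← zpow_mul, ← hs]
  have hMp : ∀ z ∈ Subgroup.zpowers y, z ^ p = 1 := by
    intro z hz
    obtain ⟨t, ht⟩ := Subgroup.mem_zpowers_iff.mp hz
    subst ht
    have hyp : y ^ p = 1 := by rw [← hyord]; exact pow_orderOf_eq_one y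
    rw [← zpow_natCast (y ^ t) p, ← zpow_mul, mul_comm, zpow_mul, zpow_natCast, hyp, one_zpow]
  have hMnorm : (Subgroup.zpowers y).Normal := by
    constructor
    intro z hz g
    apply key
    · exact hNnorm.conj_mem z (Subgroup.zpowers_le.mpr hyN hz) g
    · rw [conj_pow, hMp z hz, mul_one, mul_inv_cancel]
  set M := Subgroup.zpowers y with hMdef
  have hcardM : Nat.card M = p := by rw [hMdef, Nat.card_zpowers, hyord]
  -- the quotient
  haveI : M.Normal := hMnorm
  haveI : Finite (G ⧸ M) := Quotient.finite _
  set φ := QuotientGroup.mk' M with hφdef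
  have hφsurj : Function.Surjective φ := QuotientGroup.mk'_surjective M
  have hcards : Nat.card G = Nat.card (G ⧸ M) * p := by
    rw [← hcardM]; exact Subgroup.card_eq_card_quotient_mul_card_subgroup M
  have hQpos : 0 < Nat.card (G ⧸ M) := Nat.card_pos
  have hQlt : Nat.card (G ⧸ M) < Nat.card G := by
    rw [hcards]
    exact lt_mul_iff_one_lt_right hQpos |>.mpr hp.one_lt
  have hQodd : Odd (Nat.card (G ⧸ M)) := (Nat.odd_mul.mp (hcards ▸ hodd)).1
  have hgenQ : Subgroup.closure {φ a, φ b} = (⊤ : Subgroup (G ⧸ M)) := by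
    rw [← Set.image_pair, ← MonoidHom.map_closure, hgen,
      Subgroup.map_top_of_surjective _ hφsurj]
  have haQ : (φ a) ^ 3 = 1 := by rw [← map_pow, ha, map_one]
  have hbQ : (φ b) ^ 3 = 1 := by rw [← map_pow, hb, map_one]
  have habQ : (φ a * φ b) ^ 5 = 1 := by rw [← map_mul, ← map_pow, hab, map_one]
  by_cases h15 : 15 ∣ Nat.card (G ⧸ M)
  · exact IH (Nat.card (G ⧸ M)) hQlt (G ⧸ M) rfl hQodd h15
      ⟨φ a, φ b, haQ, hbQ, habQ, hgenQ⟩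
      (isSupersolvable_of_surjective φ hφsurj ⟨nn, H, h0, hn, hnorm, hstep⟩)
  · have h3G : 3 ∣ Nat.card G := dvd_trans (by norm_num) hdvd
    have h5G : 5 ∣ Nat.card G := dvd_trans (by norm_num) hdvd
    have h3or5 : ¬ 3 ∣ Nat.card (G ⧸ M) ∨ ¬ 5 ∣ Nat.card (G ⧸ M) := by
      by_contra hc
      push_neg at hc
      exact h15 (Nat.Coprime.mul_dvd_of_dvd_of_dvd (by norm_num) hc.1 hc.2)
    rcases h3or5 with h3 | h5
    · -- `3 ∤ |G/M|`, so `a, b ∈ M`, hence `G = M` of prime order: contradiction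
      have hcop : Nat.gcd 3 (Nat.card (G ⧸ M)) = 1 :=
        (Nat.Prime.coprime_iff_not_dvd (by norm_num)).mpr h3
      have hmem : ∀ g : G, g ^ 3 = 1 → g ∈ M := by
        intro g hg
        have h1 : orderOf (φ g) ∣ 3 := orderOf_dvd_of_pow_eq_one (by rw [← map_pow, hg, map_one])
        have h2 : orderOf (φ g) ∣ Nat.card (G ⧸ M) := orderOf_dvd_natCard _
        have : orderOf (φ g) = 1 := Nat.eq_one_of_dvd_one (hcop ▸ Nat.dvd_gcd h1 h2)
        have : φ g = 1 := orderOf_eq_one_iff.mp this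
        exact (QuotientGroup.eq_one_iff g).mp this
      have hsub : ({a, b} : Set G) ⊆ M := by
        rintro z (rfl | rfl)
        · exact hmem _ ha
        · exact hmem _ hb
      have htop : (⊤ : Subgroup G) ≤ M := hgen ▸ (Subgroup.closure_le M).mpr hsub
      have hMeq : M = ⊤ := le_antisymm le_top htop
      have : Nat.card G = p := by rw [← hcardM, hMeq, Subgroup.card_top]
      have h3p : 3 ∣ p := this ▸ h3G
      have h5p : 5 ∣ p := this ▸ h5G
      have e3 := (hp.eq_one_or_self_of_dvd 3 h3p).resolve_left (by norm_num)
      have e5 := (hp.eq_one_or_self_of_dvd 5 h5p).resolve_left (by norm_num)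
      omega
    · -- `5 ∤ |G/M|`, so `c = a*b ∈ M`
      have hcop : Nat.gcd 5 (Nat.card (G ⧸ M)) = 1 :=
        (Nat.Prime.coprime_iff_not_dvd (by norm_num)).mpr h5
      set c := a * b with hcdef
      have hcM : c ∈ M := by
        have h1 : orderOf (φ c) ∣ 5 :=
          orderOf_dvd_of_pow_eq_one (by rw [← map_pow, hab, map_one])
        have h2 : orderOf (φ c) ∣ Nat.card (G ⧸ M) := orderOf_dvd_natCard _
        have : orderOf (φ c) = 1 := Nat.eq_one_of_dvd_one (hcop ▸ Nat.dvd_gcd h1 h2)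
        exact (QuotientGroup.eq_one_iff c).mp (orderOf_eq_one_iff.mp this)
      by_cases hc1 : c = 1
      · -- then `b = a⁻¹` and `G = ⟨a⟩` has order dividing 3: contradiction
        have hbinv : b = a⁻¹ := by
          have : a⁻¹ * (a * b) = a⁻¹ * 1 := by rw [← hcdef, hc1]
          simpa [mul_assoc] using this
        have hsub : ({a, b} : Set G) ⊆ Subgroup.zpowers a := by
          rintro z (rfl | rfl)
          · exact Subgroup.mem_zpowers _
          · rw [hbinv]; exact Subgroup.inv_mem _ (Subgroup.mem_zpowers a)
        have htop : (⊤ : Subgroup G) ≤ Subgroup.zpowers a :=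
          hgen ▸ (Subgroup.closure_le _).mpr hsub
        have heq : Subgroup.zpowers a = ⊤ := le_antisymm le_top htop
        have hcardG : Nat.card G = orderOf a := by
          rw [← Nat.card_zpowers, heq, Subgroup.card_top]
        have : Nat.card G ∣ 3 := hcardG ▸ orderOf_dvd_of_pow_eq_one ha
        have := Nat.le_of_dvd (by norm_num) this
        omega
      · -- then `c` has order 5, `p = 5`, and conjugation by `a` on `M ≅ ℤ/5` is trivial
        have hc5 : orderOf c = 5 := by
          have h1 : orderOf c ∣ 5 := orderOf_dvd_of_pow_eq_one hab
          rcases (Nat.prime_five.eq_one_or_self_of_dvd _ h1) with h | h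
          · exact absurd (orderOf_eq_one_iff.mp h) hc1
          · exact h
        have h5p : 5 ∣ p := by
          have := Subgroup.orderOf_dvd_natCard M hcM
          rw [hcardM, hc5] at this
          exact this
        have hp5 : p = 5 := ((hp.eq_one_or_self_of_dvd 5 h5p).resolve_left (by norm_num)).symm
        have hyord5 : orderOf y = 5 := by rw [hyord, hp5]
        -- conjugation relation
        obtain ⟨k, hk⟩ := Subgroup.mem_zpowers_iff.mp
          (hMnorm.conj_mem y (Subgroup.mem_zpowers y) a)
        have e1 : a * y * a⁻¹ = y ^ k := hk.symm
        have s1 : ∀ t : ℤ, a * y ^ t * a⁻¹ = y ^ (k * t) := by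
          intro t
          calc a * y ^ t * a⁻¹ = (a * y * a⁻¹) ^ t := (conj_zpow).symm
            _ = (y ^ k) ^ t := by rw [e1]
            _ = y ^ (k * t) := by rw [← zpow_mul]
        have hy3 : y ^ (k * (k * k)) = y := by
          have h2 : a * (y ^ k) * a⁻¹ = y ^ (k * k) := s1 k
          have h3 : a * (y ^ (k * k)) * a⁻¹ = y ^ (k * (k * k)) := s1 (k * k)
          have hthis : a * (a * (a * y * a⁻¹) * a⁻¹) * a⁻¹ = y ^ (k * (k * k)) := by
            rw [e1, h2, h3]
          have haaa : a * a * a = 1 := by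
            have ha3 : a ^ 3 = a * a * a := by rw [pow_succ, pow_two]
            rw [← ha3]; exact ha
          have hgrp : a * (a * (a * y * a⁻¹) * a⁻¹) * a⁻¹ =
              (a * a * a) * y * (a * a * a)⁻¹ := by
            simp [mul_assoc, mul_inv_rev]
          rw [hgrp, haaa, one_mul, inv_one, mul_one] at hthis
          exact hthis.symm
        have hdvd3 : (5 : ℤ) ∣ k * (k * k) - 1 := by
          have : y ^ (k * (k * k) - 1) = 1 := by
            rw [zpow_sub, hy3, zpow_one, mul_inv_cancel]
          have := orderOf_dvd_iff_zpow_eq_one.mpr this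
          rwa [hyord5] at this
        have hk1 : (5 : ℤ) ∣ k - 1 := by
          have hz : ((k * (k * k) - 1 : ℤ) : ZMod 5) = 0 :=
            (ZMod.intCast_zmod_eq_zero_iff_dvd _ 5).mpr hdvd3
          push_cast at hz
          have hcube : ((k : ZMod 5)) ^ 3 = 1 := by linear_combination hz
          have := zmod5_cube _ hcube
          have hz2 : ((k - 1 : ℤ) : ZMod 5) = 0 := by push_cast [this]; ring
          exact (ZMod.intCast_zmod_eq_zero_iff_dvd _ 5).mp hz2
        have hyk : y ^ k = y := by
          have : y ^ (k - 1) = 1 :=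
            orderOf_dvd_iff_zpow_eq_one.mp (by rwa [hyord5])
          calc y ^ k = y ^ (k - 1) * y ^ (1 : ℤ) := by rw [← zpow_add]; ring_nf
            _ = y := by rw [this, one_mul, zpow_one]
        have hcomm : Commute a y := by
          have : a * y * a⁻¹ = y := by rw [e1, hyk]
          have := mul_inv_eq_iff_eq_mul.mp this
          exact this
        obtain ⟨s, hs⟩ := Subgroup.mem_zpowers_iff.mp hcM
        have hcomc : Commute a c := hs ▸ hcomm.zpow_right s
        have hbc : b = a⁻¹ * c := by
          rw [hcdef, ← mul_assoc, inv_mul_cancel, one_mul]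
        have hc3 : c ^ 3 = 1 := by
          have h1 : (1 : G) = (a⁻¹ * c) ^ 3 := by rw [← hbc, hb]
          rw [hcomc.inv_left.mul_pow, inv_pow, ha, inv_one, one_mul] at h1
          exact h1.symm
        have : (5 : ℕ) ∣ 3 := hc5 ▸ orderOf_dvd_of_pow_eq_one hc3
        norm_num at this

/-- Theorem 5.1 (first assertion, core): there is no finite supersolvable group of odd
order, with order divisible by `15`, that is a quotient of the von Dyck group `D(3,3,5)`. -/
theorem no_supersolvable_odd_dyck_335 (G : Type*) [Group G] [Finite G]
    (hodd : Odd (Nat.card G)) (hdvd : 15 ∣ Nat.card G) (hss : IsSupersolvable G)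
    (f : DyckGroup 3 3 5 →* G) : ¬ Function.Surjective f := by
  intro hsurj
  set a := f (PresentedGroup.of (0 : Fin 2)) with hadef
  set b := f (PresentedGroup.of (1 : Fin 2)) with hbdef
  have hrel : ∀ r ∈ dyckRels 3 3 5, (PresentedGroup.mk (dyckRels 3 3 5)) r = 1 := by
    intro r hr
    exact (QuotientGroup.eq_one_iff _).mpr (Subgroup.subset_normalClosure hr)
  have h1 : (PresentedGroup.of (0 : Fin 2) : DyckGroup 3 3 5) ^ 3 = 1 := by
    have := hrel _ (show (FreeGroup.of (0:Fin 2))^3 ∈ dyckRels 3 3 5 by left; rfl)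
    rwa [map_pow] at this
  have h2 : (PresentedGroup.of (1 : Fin 2) : DyckGroup 3 3 5) ^ 3 = 1 := by
    have := hrel _ (show (FreeGroup.of (1:Fin 2))^3 ∈ dyckRels 3 3 5 by right; left; rfl)
    rwa [map_pow] at this
  have h3 : ((PresentedGroup.of (0 : Fin 2) : DyckGroup 3 3 5) *
      PresentedGroup.of (1 : Fin 2)) ^ 5 = 1 := by
    have := hrel _ (show (FreeGroup.of (0:Fin 2) * FreeGroup.of (1:Fin 2))^5 ∈ dyckRels 3 3 5 by
      right; right; rfl)
    rwa [map_pow, map_mul] at this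
  have ha : a ^ 3 = 1 := by rw [hadef, ← map_pow, h1, map_one]
  have hb : b ^ 3 = 1 := by rw [hbdef, ← map_pow, h2, map_one]
  have hab : (a * b) ^ 5 = 1 := by rw [hadef, hbdef, ← map_mul, ← map_pow, h3, map_one]
  have hrange : Set.range (PresentedGroup.of : Fin 2 → DyckGroup 3 3 5) =
      {PresentedGroup.of 0, PresentedGroup.of 1} := by
    apply Set.Subset.antisymm
    · rintro z ⟨i, rfl⟩
      fin_cases i
      · left; rfl
      · right; rfl
    · rintro z (rfl | rfl)
      · exact ⟨0, rfl⟩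
      · exact ⟨1, rfl⟩
  have hgenD : Subgroup.closure ({PresentedGroup.of 0, PresentedGroup.of 1} :
      Set (DyckGroup 3 3 5)) = ⊤ := by
    rw [← hrange]; exact PresentedGroup.closure_range_of _
  have hgen : Subgroup.closure ({a, b} : Set G) = ⊤ := by
    rw [hadef, hbdef, ← Set.image_pair, ← MonoidHom.map_closure, hgenD,
      Subgroup.map_top_of_surjective _ hsurj]
  exact aux_no_ss (Nat.card G) G rfl hodd hdvd ⟨a, b, ha, hb, hab, hgen⟩ hss
end

section
/- Let G be a finite group of odd order whose order is divisible by 15 and which is a quotient of the von Dyck group D(3,3,5). Then the commutator subgroup G' is nilpotent if and only if |G| = 3·5^n for some natural number n. -/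
/-!
The images `x, y` of the generators of `D(3,3,5)` generate `G`, with `x³ = y³ = (xy)⁵ = 1`.
In the abelianization `(xy)³ = x³y³ = 1`, so `xy ∈ G'`; modulo any normal subgroup containing
`xy` we have `y ≡ x⁻¹`, so the quotient is cyclic. Hence `G'` is the normal closure of `xy`
and `|G/G'|` divides `3`.

If `G'` is nilpotent, its Sylow `5`-subgroup is unique and contains every conjugate of the
`5`-element `xy`, so `G'` is a `5`-group, and `|G| = 3·5ⁿ` because `3 ∣ |G|`. Conversely, if
`|G| = 3·5ⁿ`, a Sylow `5`-subgroup has index `3`, the smallest prime factor of `|G|`, so it is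
normal with cyclic quotient and therefore contains `G'`.
-/

open Subgroup

namespace DyckGroup

variable {a b c : ℕ} {G : Type*} [Group G] (f : DyckGroup a b c →* G)

lemma map_mk_of_mem_dyckRels {r : FreeGroup (Fin 2)} (hr : r ∈ dyckRels a b c) :
    f (PresentedGroup.mk _ r) = 1 := by
  rw [PresentedGroup.one_of_mem hr, map_one]

lemma map_of_zero_pow : f (PresentedGroup.of 0) ^ a = 1 := by
  rw [← map_pow]; exact map_mk_of_mem_dyckRels f (r := FreeGroup.of 0 ^ a) (by simp [dyckRels])

lemma map_of_one_pow : f (PresentedGroup.of 1) ^ b = 1 := by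
  rw [← map_pow]; exact map_mk_of_mem_dyckRels f (r := FreeGroup.of 1 ^ b) (by simp [dyckRels])

lemma map_of_mul_pow : (f (PresentedGroup.of 0) * f (PresentedGroup.of 1)) ^ c = 1 := by
  rw [← map_mul, ← map_pow]
  exact map_mk_of_mem_dyckRels f
    (r := (FreeGroup.of 0 * FreeGroup.of 1) ^ c) (by simp [dyckRels])

lemma closure_map_of_pair_eq_top (hf : Function.Surjective f) :
    closure {f (PresentedGroup.of 0), f (PresentedGroup.of 1)} = ⊤ := by
  rw [← map_top_of_surjective f hf, ← PresentedGroup.closure_range_of, MonoidHom.map_closure,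
    ← Set.range_comp]
  congr 1
  ext
  simp [Fin.exists_fin_two, eq_comm]

end DyckGroup

section

variable {G : Type*} [Group G]

lemma mul_mem_commutator_of_pow_eq_one {x y : G} {m n : ℕ} (hmn : m.Coprime n)
    (hx : x ^ m = 1) (hy : y ^ m = 1) (hxy : (x * y) ^ n = 1) : x * y ∈ commutator G := by
  rw [← Abelianization.ker_of, MonoidHom.mem_ker, ← orderOf_eq_one_iff]
  have hm : orderOf (Abelianization.of (x * y)) ∣ m := by
    apply orderOf_dvd_of_pow_eq_one
    rw [map_mul, mul_pow, ← map_pow, ← map_pow, hx, hy, map_one, one_mul]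
  have hn : orderOf (Abelianization.of (x * y)) ∣ n :=
    orderOf_dvd_of_pow_eq_one (by rw [← map_pow, hxy, map_one])
  exact Nat.eq_one_of_dvd_one (hmn ▸ Nat.dvd_gcd hm hn)

variable {N : Subgroup G} [N.Normal] {x y : G}

lemma zpowers_mk_eq_top_of_mul_mem (hgen : closure {x, y} = ⊤) (hxy : x * y ∈ N) :
    zpowers (x : G ⧸ N) = ⊤ := by
  have hy : (y : G ⧸ N) = (x : G ⧸ N)⁻¹ :=
    eq_inv_of_mul_eq_one_right <| by rwa [← QuotientGroup.mk_mul, QuotientGroup.eq_one_iff]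
  rw [eq_top_iff, ← map_top_of_surjective _ (QuotientGroup.mk'_surjective N), ← hgen,
    MonoidHom.map_closure, Set.image_pair, closure_le]
  rintro _ (rfl | rfl)
  · exact mem_zpowers _
  · change (y : G ⧸ N) ∈ zpowers (x : G ⧸ N)
    exact hy ▸ inv_mem (mem_zpowers _)

lemma commutator_le_of_mul_mem (hgen : closure {x, y} = ⊤) (hxy : x * y ∈ N) :
    commutator G ≤ N :=
  have : IsCyclic (G ⧸ N) :=
    isCyclic_iff_exists_zpowers_eq_top.mpr ⟨_, zpowers_mk_eq_top_of_mul_mem hgen hxy⟩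
  Normal.quotient_commutative_iff_commutator_le.mp inferInstance

lemma card_quotient_dvd_of_mul_mem {m : ℕ} (hgen : closure {x, y} = ⊤) (hxy : x * y ∈ N)
    (hx : x ^ m = 1) : Nat.card (G ⧸ N) ∣ m := by
  rw [← orderOf_eq_card_of_zpowers_eq_top (zpowers_mk_eq_top_of_mul_mem hgen hxy)]
  exact orderOf_dvd_of_pow_eq_one (by rw [← QuotientGroup.mk_pow, hx, QuotientGroup.mk_one])

lemma commutator_eq_normalClosure_mul {m n : ℕ} (hmn : m.Coprime n) (hgen : closure {x, y} = ⊤)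
    (hx : x ^ m = 1) (hy : y ^ m = 1) (hxy : (x * y) ^ n = 1) :
    commutator G = normalClosure {x * y} :=
  le_antisymm (commutator_le_of_mul_mem hgen (subset_normalClosure rfl))
    (normalClosure_le_normal (Set.singleton_subset_iff.mpr
      (mul_mem_commutator_of_pow_eq_one hmn hx hy hxy)))

end

lemma Nat.minFac_prime_mul_prime_pow {p q : ℕ} (hp : p.Prime) (hq : q.Prime) (hqp : q < p)
    (n : ℕ) : (q * p ^ n).minFac = q := by
  refine le_antisymm (Nat.minFac_le_of_dvd hq.two_le (dvd_mul_right q _)) ?_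
  have hr := Nat.minFac_prime
    (lt_of_lt_of_le hq.one_lt (Nat.le_mul_of_pos_right q (pow_pos hp.pos n))).ne'
  rcases hr.dvd_mul.mp (Nat.minFac_dvd _) with h | h
  · exact ((Nat.prime_dvd_prime_iff_eq hr hq).mp h).ge
  · rw [(Nat.prime_dvd_prime_iff_eq hr hp).mp (hr.dvd_of_dvd_pow h)]
    exact hqp.le

section

variable {G : Type*} [Group G] {p : ℕ} [Fact p.Prime]

lemma IsPGroup.closure_of_isNilpotent {S : Set G} [Finite (closure S)]
    [Group.IsNilpotent (closure S)] (hS : ∀ s ∈ S, ∃ k, s ^ p ^ k = 1) :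
    IsPGroup p (closure S) := by
  obtain ⟨P⟩ : Nonempty (Sylow p (closure S)) := inferInstance
  have := Sylow.unique_of_normal P inferInstance
  have hle : closure S ≤ (P : Subgroup (closure S)).map (closure S).subtype := by
    rw [closure_le]
    intro s hs
    obtain ⟨k, hk⟩ := hS s hs
    let t : closure S := ⟨s, subset_closure hs⟩
    have hpg : IsPGroup p (zpowers t) := by
      refine IsPGroup.of_card_dvd_pow (n := k) ?_
      rw [Nat.card_zpowers]
      exact orderOf_dvd_of_pow_eq_one (Subtype.ext hk)
    obtain ⟨Q, hQ⟩ := hpg.exists_le_sylow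
    exact ⟨_, Subsingleton.elim Q P ▸ hQ (mem_zpowers _), rfl⟩
  exact (P.isPGroup'.map _).to_le hle

lemma IsPGroup.normalClosure_singleton_of_isNilpotent {g : G} [Finite (normalClosure {g})]
    [Group.IsNilpotent (normalClosure {g})] {k : ℕ} (hg : g ^ p ^ k = 1) :
    IsPGroup p (normalClosure {g}) := by
  have : Finite (closure (Group.conjugatesOfSet {g})) := ‹Finite (normalClosure {g})›
  have : Group.IsNilpotent (closure (Group.conjugatesOfSet {g})) :=
    ‹Group.IsNilpotent (normalClosure {g})›
  refine IsPGroup.closure_of_isNilpotent fun s hs => ?_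
  obtain ⟨_, rfl, hconj⟩ := Group.mem_conjugatesOfSet_iff.mp hs
  obtain ⟨c, rfl⟩ := isConj_iff.mp hconj
  exact ⟨k, by rw [conj_pow, hg, mul_one, mul_inv_cancel]⟩

lemma exists_card_eq_prime_mul_pow_of_isPGroup [Finite G] {q : ℕ} (hq : q.Prime) (hqp : q ≠ p)
    {N : Subgroup G} (hN : IsPGroup p N) (hNq : Nat.card (G ⧸ N) ∣ q) (hqG : q ∣ Nat.card G) :
    ∃ n, Nat.card G = q * p ^ n := by
  obtain ⟨n, hn⟩ := hN.exists_card_eq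
  refine ⟨n, ?_⟩
  rw [card_eq_card_quotient_mul_card_subgroup N, hn] at hqG ⊢
  rcases hq.eq_one_or_self_of_dvd _ hNq with h | h
  · rw [h, one_mul] at hqG
    exact absurd ((Nat.prime_dvd_prime_iff_eq hq Fact.out).mp (hq.dvd_of_dvd_pow hqG)) hqp
  · rw [h]

lemma IsPGroup.commutator_of_card_eq_prime_mul_pow [Finite G] {q n : ℕ} (hq : q.Prime)
    (hqp : q < p) (hG : Nat.card G = q * p ^ n) : IsPGroup p (commutator G) := by
  have : Fact q.Prime := ⟨hq⟩
  have hp : p.Prime := Fact.out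
  have hpq : ¬p ∣ q := fun h => hqp.ne ((Nat.prime_dvd_prime_iff_eq hp hq).mp h).symm
  obtain ⟨P⟩ : Nonempty (Sylow p G) := inferInstance
  have hP : Nat.card P = p ^ n := by
    rw [P.card_eq_multiplicity, hG, Nat.factorization_mul hq.ne_zero (pow_pos hp.pos n).ne',
      Finsupp.add_apply, Nat.factorization_eq_zero_of_not_dvd hpq, hp.factorization_pow,
      Finsupp.single_eq_same, zero_add]
  have hindex : P.index = q := by
    have := (P : Subgroup G).card_mul_index
    rw [hP, hG, mul_comm q] at this
    exact Nat.eq_of_mul_eq_mul_left (pow_pos hp.pos n) this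
  have := normal_of_index_eq_minFac_card
    (hindex.trans (hG ▸ Nat.minFac_prime_mul_prime_pow hp hq hqp n).symm)
  have : IsCyclic (G ⧸ (P : Subgroup G)) :=
    isCyclic_of_prime_card ((index_eq_card _).symm.trans hindex)
  exact P.isPGroup'.to_le (Normal.quotient_commutative_iff_commutator_le.mp inferInstance)

end

theorem commutator_nilpotent_iff_dyck_335_general (G : Type*) [Group G] [Finite G]
    (hdvd : 15 ∣ Nat.card G)
    (f : DyckGroup 3 3 5 →* G) (hf : Function.Surjective f) :
    Group.IsNilpotent (commutator G) ↔ ∃ n : ℕ, Nat.card G = 3 * 5 ^ n := by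
  have : Fact (Nat.Prime 5) := ⟨by norm_num⟩
  have hgen := DyckGroup.closure_map_of_pair_eq_top f hf
  have hx := DyckGroup.map_of_zero_pow f
  have hy := DyckGroup.map_of_one_pow f
  have hxy := DyckGroup.map_of_mul_pow f
  have hcop : Nat.Coprime 3 5 := by norm_num
  constructor
  · intro hnil
    have h5 : IsPGroup 5 (commutator G) := by
      rw [commutator_eq_normalClosure_mul hcop hgen hx hy hxy] at hnil ⊢
      exact IsPGroup.normalClosure_singleton_of_isNilpotent (k := 1) (by rwa [pow_one])
    exact exists_card_eq_prime_mul_pow_of_isPGroup Nat.prime_three (by norm_num) h5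
      (card_quotient_dvd_of_mul_mem hgen (mul_mem_commutator_of_pow_eq_one hcop hx hy hxy) hx)
      (dvd_trans (by norm_num) hdvd)
  · rintro ⟨n, hn⟩
    exact IsPGroup.isNilpotent
      (IsPGroup.commutator_of_card_eq_prime_mul_pow Nat.prime_three (by norm_num) hn)

/-- Proposition 7.2 (core): for a finite group `G` of odd order divisible by `15` that is
a quotient of the von Dyck group `D(3,3,5)`, the commutator subgroup `G'` is nilpotent if
and only if `|G| = 3·5^n`. -/
theorem commutator_nilpotent_iff_dyck_335 (G : Type*) [Group G] [Finite G]
    (hodd : Odd (Nat.card G)) (hdvd : 15 ∣ Nat.card G)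
    (f : DyckGroup 3 3 5 →* G) (hf : Function.Surjective f) :
    Group.IsNilpotent (commutator G) ↔ ∃ n : ℕ, Nat.card G = 3 * 5 ^ n :=
  commutator_nilpotent_iff_dyck_335_general G hdvd f hf
end

section
/- Let G be a finite metacyclic group, i.e. G has a cyclic normal subgroup M with G/M cyclic, and let p be the smallest prime dividing |G| (assume G is nontrivial). Then G has a normal subgroup N such that N is cyclic, G/N is cyclic, and p divides the index [G : N]. -/
open Subgroup

/-- Lemma 3.4: a nontrivial finite metacyclic group `G` has a normal cyclic subgroup `N`
with `G/N` cyclic such that the smallest prime `p` dividing `|G|` divides the index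
`[G : N]`. -/
theorem metacyclic_normal_cyclic_index (G : Type*) [Group G] [Finite G]
    (hG : Nontrivial G)
    (hmc : ∃ M : Subgroup G, ∃ _h : M.Normal, IsCyclic M ∧ IsCyclic (G ⧸ M)) :
    ∃ N : Subgroup G, ∃ _h : N.Normal,
      IsCyclic N ∧ IsCyclic (G ⧸ N) ∧ (Nat.card G).minFac ∣ N.index := by
  obtain ⟨M, hMn, hMc, hQMc⟩ := hmc
  set p := (Nat.card G).minFac with hp_def
  have hcardG : 1 < Nat.card G := Finite.one_lt_card_iff_nontrivial.mpr hG
  have hp : p.Prime := Nat.minFac_prime (by omega)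
  haveI hpf : Fact p.Prime := ⟨hp⟩
  have hp2 : 2 ≤ p := hp.two_le
  by_cases hpM : p ∣ M.index
  · exact ⟨M, hMn, hMc, hQMc, hpM⟩
  -- p divides |M|
  have hpG : p ∣ Nat.card G := Nat.minFac_dvd _
  have hMmul : Nat.card M * M.index = Nat.card G := Subgroup.card_mul_index M
  have hpMcard : p ∣ Nat.card M := by
    rcases (hp.dvd_mul).mp (hMmul ▸ hpG) with h | h
    · exact h
    · exact absurd h hpM
  -- get a generator of M
  obtain ⟨⟨g, hgM⟩, hgen⟩ := hMc.exists_generator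
  have hM_eq : M = Subgroup.zpowers g := by
    apply le_antisymm
    · intro x hx
      obtain ⟨n, hn⟩ := hgen ⟨x, hx⟩
      exact ⟨n, by simpa using congrArg Subtype.val hn⟩
    · exact Subgroup.zpowers_le.mpr hgM
  have hordg : orderOf g = Nat.card M := by
    rw [hM_eq, Nat.card_zpowers]
  set m := Nat.card M with hm_def
  have hm_pos : 0 < m := Nat.card_pos
  -- the subgroup N of index p in M
  set N : Subgroup G := Subgroup.zpowers (g ^ p) with hN_def
  have hNM : N ≤ M := by
    rw [hM_eq]
    exact Subgroup.zpowers_le.mpr ⟨(p : ℤ), by simp⟩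
  have hcardN : Nat.card N = m / p := by
    rw [hN_def, Nat.card_zpowers, orderOf_pow, hordg, Nat.gcd_eq_right hpMcard]
  have hm_eq : m = p * (m / p) := (Nat.mul_div_cancel' hpMcard).symm
  have hmp_pos : 0 < m / p := Nat.div_pos (Nat.le_of_dvd hm_pos hpMcard) hp.pos
  -- N is normal in G
  have hNn : N.Normal := by
    constructor
    intro n hn c
    obtain ⟨t, ht⟩ := hn
    have hconj : c * g * c⁻¹ ∈ Subgroup.zpowers g := hM_eq ▸ hMn.conj_mem g hgM c
    obtain ⟨j, hj⟩ := hconj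
    have hj' : g ^ j = c * g * c⁻¹ := hj
    have ht' : (g ^ p) ^ t = n := ht
    refine ⟨j * t, ?_⟩
    show (g ^ p) ^ (j * t) = c * n * c⁻¹
    rw [← ht', ← conj_zpow, ← conj_pow, ← hj']
    rw [← zpow_natCast g p, ← zpow_mul, ← zpow_natCast (g ^ j) p, ← zpow_mul, ← zpow_mul]
    congr 1
    ring
  have hcardN' : Nat.card (N.subgroupOf M) = m / p := by
    rw [Nat.card_congr (Subgroup.subgroupOfEquivOfLe hNM).toEquiv, hcardN]
  -- relindex of N in M is p
  have hrel : N.relIndex M = p := by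
    show (N.subgroupOf M).index = p
    have h2 : Nat.card (N.subgroupOf M) * (N.subgroupOf M).index = Nat.card M :=
      Subgroup.card_mul_index (N.subgroupOf M)
    rw [hcardN'] at h2
    have h3 : (m / p) * (N.subgroupOf M).index = (m / p) * p := by
      rw [h2, ← hm_def, Nat.div_mul_cancel hpMcard]
    exact Nat.eq_of_mul_eq_mul_left hmp_pos h3
  have hNindex : N.index = p * M.index := by
    rw [← Subgroup.relIndex_mul_index hNM, hrel]
  have hpNindex : p ∣ N.index := ⟨M.index, hNindex⟩
  -- N is cyclic
  have hNc : IsCyclic N := by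
    have : IsCyclic (N.subgroupOf M) := Subgroup.isCyclic _
    exact isCyclic_of_surjective (Subgroup.subgroupOfEquivOfLe hNM)
      (Subgroup.subgroupOfEquivOfLe hNM).surjective
  haveI := hNn
  -- quotient setup
  set π := QuotientGroup.mk' N with hπ_def
  set gbar : G ⧸ N := π g with hgbar_def
  have hgpN : g ^ p ∈ N := ⟨(1 : ℤ), by simp⟩
  have hgbar_pow : gbar ^ p = 1 := by
    rw [hgbar_def, ← map_pow]
    exact (QuotientGroup.eq_one_iff _).mpr hgpN
  have hgbar_ne : gbar ≠ 1 := by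
    intro h
    have hgN : g ∈ N := (QuotientGroup.eq_one_iff g).mp h
    have hMN : M ≤ N := hM_eq ▸ Subgroup.zpowers_le.mpr hgN
    have := Subgroup.card_le_of_le hMN
    rw [hcardN, ← hm_def] at this
    have : m / p < m := Nat.div_lt_self hm_pos hp.one_lt
    omega
  have hordgbar : orderOf gbar = p := by
    exact orderOf_eq_prime hgbar_pow hgbar_ne
  set Mbar : Subgroup (G ⧸ N) := Subgroup.zpowers gbar with hMbar_def
  have hMbar_map : Mbar = M.map π := by
    rw [hMbar_def, hM_eq, ← MonoidHom.map_zpowers]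
  have hMbarn : Mbar.Normal := hMbar_map ▸ hMn.map π (QuotientGroup.mk'_surjective N)
  haveI := hMbarn
  have hcardMbar : Nat.card Mbar = p := by
    rw [hMbar_def, Nat.card_zpowers, hordgbar]
  have hMbarc : IsCyclic Mbar := isCyclic_of_prime_card hcardMbar
  -- Mbar is central
  have hcenter : Mbar ≤ Subgroup.center (G ⧸ N) := by
    set c : G ⧸ N →* MulAut Mbar := MulAut.conjNormal with hc_def
    have hd1 : Nat.card c.range ∣ Nat.card (MulAut Mbar) := Subgroup.card_subgroup_dvd_card _
    have hd2 : Nat.card c.range ∣ Nat.card (G ⧸ N) := by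
      rw [← Subgroup.index_ker c]
      exact Subgroup.index_dvd_card c.ker
    have hd3 : Nat.card (G ⧸ N) ∣ Nat.card G := by
      have : Nat.card (G ⧸ N) = N.index := rfl
      rw [this]
      exact Subgroup.index_dvd_card N
    have hMAut : Nat.card (MulAut Mbar) = p - 1 := by
      haveI := hMbarc
      rw [IsCyclic.card_mulAut, hcardMbar, Nat.totient_prime hp]
    have hd : Nat.card c.range = 1 := by
      by_contra hne
      set d := Nat.card c.range with hd_def
      have hq : d.minFac.Prime := Nat.minFac_prime hne
      have hq1 : d.minFac ∣ p - 1 := (Nat.minFac_dvd d).trans (hMAut ▸ hd1)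
      have hq2 : d.minFac ∣ Nat.card G := (Nat.minFac_dvd d).trans (hd2.trans hd3)
      have hle : p ≤ d.minFac := Nat.minFac_le_of_dvd hq.two_le hq2
      have hlt : d.minFac ≤ p - 1 := Nat.le_of_dvd (by omega) hq1
      omega
    have hcr : ∀ q : G ⧸ N, c q = 1 := by
      intro q
      have : c q ∈ c.range := ⟨q, rfl⟩
      rw [(Subgroup.card_eq_one).mp hd] at this
      exact this
    intro x hx
    rw [Subgroup.mem_center_iff]
    intro q
    have h1 : (MulAut.conjNormal q ⟨x, hx⟩ : G ⧸ N) = q * x * q⁻¹ :=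
      MulAut.conjNormal_apply q ⟨x, hx⟩
    have h2 : MulAut.conjNormal q (⟨x, hx⟩ : Mbar) = ⟨x, hx⟩ := by
      have := hcr q
      rw [hc_def] at this
      rw [this]; rfl
    have h3 : q * x * q⁻¹ = x := by rw [← h1, h2]
    have := congrArg (· * q) h3
    simpa [mul_assoc] using this
  -- (G ⧸ N) ⧸ Mbar is cyclic
  have hQQc : IsCyclic ((G ⧸ N) ⧸ Mbar) := by
    set φ : G →* (G ⧸ N) ⧸ Mbar := (QuotientGroup.mk' Mbar).comp π with hφ_def
    have hker : ∀ x ∈ M, φ x = 1 := by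
      intro x hx
      have : π x ∈ Mbar := hMbar_map ▸ Subgroup.mem_map.mpr ⟨x, hx, rfl⟩
      exact (QuotientGroup.eq_one_iff _).mpr this
    set ψ : G ⧸ M →* (G ⧸ N) ⧸ Mbar := QuotientGroup.lift M φ hker with hψ_def
    have hsurj : Function.Surjective ψ := by
      intro y
      obtain ⟨z, rfl⟩ := QuotientGroup.mk'_surjective Mbar y
      obtain ⟨x, rfl⟩ := QuotientGroup.mk'_surjective N z
      exact ⟨QuotientGroup.mk x, rfl⟩
    exact isCyclic_of_surjective ψ hsurj
  -- G ⧸ N is commutative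
  have hcomm : ∀ a b : G ⧸ N, a * b = b * a := by
    haveI := hQQc
    exact commutative_of_cyclic_center_quotient (QuotientGroup.mk' Mbar)
      (by rw [QuotientGroup.ker_mk']; exact hcenter)
  -- cardinality bookkeeping
  set n' := Mbar.index with hn'_def
  have hcardQ : Nat.card (G ⧸ N) = N.index := rfl
  have hQmul : p * n' = Nat.card (G ⧸ N) := by
    rw [← Subgroup.card_mul_index Mbar, hcardMbar]
  have hn'_eq : n' = M.index := by
    have : p * n' = p * M.index := by rw [hQmul, hcardQ, hNindex]
    exact Nat.eq_of_mul_eq_mul_left hp.pos this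
  have hpn' : ¬ p ∣ n' := hn'_eq ▸ hpM
  have hn'_pos : 0 < n' := by
    rcases Nat.eq_zero_or_pos n' with h | h
    · exfalso; exact hpn' (h ▸ dvd_zero p)
    · exact h
  -- find an element of large order in G ⧸ N
  have hQNc : IsCyclic (G ⧸ N) := by
    haveI := hQQc
    obtain ⟨t, htgen⟩ := hQQc.exists_generator
    have hordt : orderOf t = Nat.card ((G ⧸ N) ⧸ Mbar) :=
      orderOf_eq_card_of_forall_mem_zpowers htgen
    have hcardQQ : Nat.card ((G ⧸ N) ⧸ Mbar) = n' := rfl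
    obtain ⟨y, hy⟩ := QuotientGroup.mk'_surjective Mbar t
    have hdvd1 : n' ∣ orderOf y := by
      rw [← hcardQQ, ← hordt, ← hy]
      exact orderOf_map_dvd _ _
    have hdvd2 : orderOf y ∣ p * n' := by
      rw [hQmul]
      exact orderOf_dvd_natCard y
    obtain ⟨s, hs⟩ := hdvd1
    have hsp : s ∣ p := by
      have h4 : orderOf y ∣ n' * p := by rwa [mul_comm] at hdvd2
      rw [hs] at h4
      exact (Nat.mul_dvd_mul_iff_left hn'_pos).mp h4
    rcases (Nat.Prime.eq_one_or_self_of_dvd hp s hsp) with h1 | h1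
    · -- orderOf y = n'; use gbar * y
      have hordy : orderOf y = n' := by rw [hs, h1, mul_one]
      have hcop : Nat.Coprime (orderOf gbar) (orderOf y) := by
        rw [hordgbar, hordy]
        exact (Nat.Prime.coprime_iff_not_dvd hp).mpr hpn'
      have hcommute : Commute gbar y := hcomm gbar y
      have hord : orderOf (gbar * y) = Nat.card (G ⧸ N) := by
        rw [hcommute.orderOf_mul_eq_mul_orderOf_of_coprime hcop, hordgbar, hordy, hQmul]
      exact isCyclic_of_orderOf_eq_card _ hord
    · -- orderOf y = p * n'
      have hord : orderOf y = Nat.card (G ⧸ N) := by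
        rw [hs, h1, ← hQmul]; ring
      exact isCyclic_of_orderOf_eq_card _ hord
  exact ⟨N, hNn, hNc, hQNc, hpNindex⟩
end

section
/- Let G be a finite CLT group and let H be a Hall subgroup of G, i.e. a subgroup whose order |H| is coprime to its index [G : H]. Then H is also a CLT group. -/
/-- A finite group `G` is a CLT group (Converse of Lagrange's Theorem) if for every
divisor `d` of `|G|` there exists a subgroup of `G` of order `d`. -/
def IsCLT (G : Type*) [Group G] : Prop :=
  ∀ d : ℕ, d ∣ Nat.card G → ∃ H : Subgroup G, Nat.card H = d

/-!
Given `d ∣ |H|`, the CLT property of `G` yields a subgroup `K` of order `d · [G : H]`, and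
`H ⊓ K` has order exactly `d`: its order divides `|K| = d · [G : H]` and is coprime to `[G : H]`,
so it divides `d`; and `[K : H ⊓ K] ≤ [G : H]` forces it to be at least `d`.
-/

namespace Subgroup

variable {G : Type*} [Group G]

theorem card_inf_mul_relIndex (H K : Subgroup G) :
    Nat.card ↥(H ⊓ K) * H.relIndex K = Nat.card K := by
  rw [← relIndex_bot_left, ← relIndex_bot_left, ← inf_relIndex_right H K,
    relIndex_mul_relIndex ⊥ (H ⊓ K) K bot_le inf_le_right]

theorem card_le_card_inf_mul_index (H K : Subgroup G) [H.FiniteIndex] :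
    Nat.card K ≤ Nat.card ↥(H ⊓ K) * H.index := by
  have hrel : H.relIndex K ≤ H.index := by
    simpa only [relIndex_top_right] using
      relIndex_le_of_le_right le_top (by rw [relIndex_top_right]; exact FiniteIndex.index_ne_zero)
  calc Nat.card K = Nat.card ↥(H ⊓ K) * H.relIndex K := (card_inf_mul_relIndex H K).symm
    _ ≤ Nat.card ↥(H ⊓ K) * H.index := Nat.mul_le_mul_left _ hrel

theorem card_inf_eq_of_coprime_index [Finite G] {H K : Subgroup G}
    (hH : (Nat.card H).Coprime H.index) {d : ℕ} (hK : Nat.card K = d * H.index) :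
    Nat.card ↥(H ⊓ K) = d := by
  have hindex : 0 < H.index := Nat.pos_of_ne_zero index_ne_zero_of_finite
  have hd : 0 < d := Nat.pos_of_mul_pos_right (hK ▸ Nat.card_pos)
  have hdvd : Nat.card ↥(H ⊓ K) ∣ d :=
    (hH.coprime_dvd_left (card_dvd_of_le inf_le_left)).dvd_of_dvd_mul_right
      (hK ▸ card_dvd_of_le inf_le_right)
  have hle : d ≤ Nat.card ↥(H ⊓ K) :=
    Nat.le_of_mul_le_mul_right (hK ▸ card_le_card_inf_mul_index H K) hindex
  exact le_antisymm (Nat.le_of_dvd hd hdvd) hle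

end Subgroup

/-- Theorem 8.6(a): a Hall subgroup of a finite CLT group is a CLT group. -/
theorem hall_subgroup_of_CLT_is_CLT (G : Type*) [Group G] [Finite G] (hG : IsCLT G)
    (H : Subgroup G) (hHall : Nat.Coprime (Nat.card H) H.index) :
    IsCLT H := by
  intro d hd
  obtain ⟨K, hK⟩ := hG (d * H.index) (H.card_mul_index ▸ mul_dvd_mul_right hd _)
  refine ⟨(H ⊓ K).subgroupOf H, ?_⟩
  rw [Nat.card_congr (Subgroup.subgroupOfEquivOfLe inf_le_left).toEquiv]
  exact Subgroup.card_inf_eq_of_coprime_index hHall hK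
end

section
/- Let G be a nontrivial finite CLT group and let p be the smallest prime dividing |G|. Then p divides the index [G : G'] of the commutator subgroup G' in G. -/
/-!
A CLT group `G` has a subgroup `H` of order `|G| / p`, i.e. of index `p`, where `p` is the smallest
prime dividing `|G|`. A subgroup whose index is the smallest prime divisor of the group order is
normal, so `G ⧸ H` is a group of prime order, hence cyclic and abelian. Therefore `G' ≤ H`, and
`p = [G : H]` divides `[G : G']`.
-/

theorem Subgroup.commutator_le_of_index_prime {G : Type*} [Group G] {H : Subgroup G} [H.Normal]
    (hH : H.index.Prime) : _root_.commutator G ≤ H := by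
  have : Fact (Nat.card (G ⧸ H)).Prime := ⟨H.index_eq_card ▸ hH⟩
  have : IsCyclic (G ⧸ H) := isCyclic_of_prime_card rfl
  exact Subgroup.Normal.quotient_commutative_iff_commutator_le.mp inferInstance

theorem IsCLT.exists_subgroup_index_eq {G : Type*} [Group G] [Finite G] (hclt : IsCLT G)
    {d : ℕ} (hd : d ∣ Nat.card G) : ∃ H : Subgroup G, H.index = d := by
  obtain ⟨H, hH⟩ := hclt (Nat.card G / d) (Nat.div_dvd_of_dvd hd)
  refine ⟨H, Nat.eq_of_mul_eq_mul_right (Nat.card_pos (α := H)) ?_⟩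
  rw [H.index_mul_card, hH, Nat.mul_div_cancel' hd]

/-- Theorem 8.6(b): the index of the commutator subgroup of a nontrivial finite CLT group
is divisible by the smallest prime dividing the group order. -/
theorem minFac_dvd_commutator_index_of_CLT (G : Type*) [Group G] [Finite G]
    (hG : Nontrivial G) (hclt : IsCLT G) :
    (Nat.card G).minFac ∣ (commutator G).index := by
  have hp : (Nat.card G).minFac.Prime :=
    Nat.minFac_prime (Finite.one_lt_card_iff_nontrivial.mpr hG).ne'
  obtain ⟨H, hH⟩ := hclt.exists_subgroup_index_eq (Nat.minFac_dvd (Nat.card G))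
  have : H.Normal := Subgroup.normal_of_index_eq_minFac_card hH
  rw [← hH]
  exact Subgroup.index_dvd_of_le (Subgroup.commutator_le_of_index_prime (hH ▸ hp))
end

section
/- Let G be a finite CLT group whose order is divisible by 4. Then G has a quotient (by some normal subgroup) isomorphic to one of the following groups: the cyclic group C4, the Klein four-group C2 × C2, the cyclic group C6, or the symmetric group S4. -/
open Function Subgroup

theorem IsCLT.exists_index_eq {G : Type*} [Group G] [Finite G] (hG : IsCLT G) {d : ℕ}
    (hd : d ∣ Nat.card G) : ∃ H : Subgroup G, H.index = d := by
  obtain ⟨k, hk⟩ := hd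
  have hk0 : 0 < k := Nat.pos_of_mul_pos_left (hk ▸ Nat.card_pos)
  obtain ⟨H, hH⟩ := hG k (Dvd.intro_left d hk.symm)
  refine ⟨H, Nat.eq_of_mul_eq_mul_left hk0 ?_⟩
  rw [← hH, card_mul_index, hk, hH, mul_comm]

theorem Subgroup.normal_of_le_center {G : Type*} [Group G] {N : Subgroup G}
    (h : N ≤ center G) : N.Normal :=
  ⟨fun n hn g => by rwa [mem_center_iff.mp (h hn) g, mul_inv_cancel_right]⟩

theorem IsPGroup.exists_normal_card_eq_prime {p : ℕ} [Fact p.Prime] {G : Type*} [Group G]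
    [Finite G] [Nontrivial G] (hG : IsPGroup p G) :
    ∃ N : Subgroup G, N.Normal ∧ Nat.card N = p := by
  have : Nontrivial (center G) := hG.center_nontrivial
  obtain ⟨n, hn, hcard⟩ := (hG.to_subgroup (center G)).nontrivial_iff_card.mp this
  obtain ⟨z, hz⟩ := exists_prime_orderOf_dvd_card' (G := center G) p
    (hcard ▸ dvd_pow_self p hn.ne')
  refine ⟨zpowers (z : G), normal_of_le_center (zpowers_le.mpr z.2), ?_⟩
  rw [Nat.card_zpowers, orderOf_submonoid, hz]

theorem Sylow.exists_normal_index_eq_card_of_normalizer_eq {p : ℕ} [Fact p.Prime] {G : Type*}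
    [Group G] [Finite G] (P : Sylow p G) [IsMulCommutative (P : Subgroup G)]
    (h : normalizer (P : Subgroup G) = (P : Subgroup G)) :
    ∃ N : Subgroup G, N.Normal ∧ N.index = Nat.card P := by
  have hP : normalizer (P : Subgroup G) ≤ centralizer (P : Set G) := by
    rw [h]
    exact le_centralizer_iff_isMulCommutative.mpr inferInstance
  exact ⟨(MonoidHom.transferSylow P hP).ker, inferInstance,
    (MonoidHom.ker_transferSylow_isComplement' P hP).symm.index_eq_card⟩

theorem MonoidHom.prod_surjective_of_coprime {G A B : Type*} [Group G] [Group A] [Group B]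
    [Finite A] [Finite B] {f : G →* A} {g : G →* B} (hf : Surjective f) (hg : Surjective g)
    (hAB : (Nat.card A).Coprime (Nat.card B)) : Surjective (f.prod g) := by
  have hA : Nat.card A ∣ Nat.card (f.prod g).range :=
    card_dvd_of_surjective ((MonoidHom.fst A B).comp (f.prod g).range.subtype) fun a =>
      let ⟨x, hx⟩ := hf a; ⟨⟨_, x, rfl⟩, hx⟩
  have hB : Nat.card B ∣ Nat.card (f.prod g).range :=
    card_dvd_of_surjective ((MonoidHom.snd A B).comp (f.prod g).range.subtype) fun b =>
      let ⟨x, hx⟩ := hg b; ⟨⟨_, x, rfl⟩, hx⟩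
  rw [← MonoidHom.range_eq_top]
  refine eq_top_of_le_card _ ?_
  rw [Nat.card_prod]
  exact Nat.le_of_dvd Nat.card_pos (hAB.mul_dvd_of_dvd_of_dvd hA hB)

theorem exists_normal_quotient_mulEquiv_of_surjective {G R T : Type*} [Group G] [Group R]
    [Group T] (f : G →* R) (hf : Surjective f) (e : R ≃* T) :
    ∃ N : Subgroup G, ∃ _h : N.Normal, Nonempty (G ⧸ N ≃* T) :=
  ⟨f.ker, inferInstance, ⟨(QuotientGroup.quotientKerEquivOfSurjective f hf).trans e⟩⟩

theorem nonempty_mulEquiv_of_card_eq_four {Q : Type*} [Group Q] (h : Nat.card Q = 4) :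
    Nonempty (Q ≃* Multiplicative (ZMod 4)) ∨
      Nonempty (Q ≃* Multiplicative (ZMod 2 × ZMod 2)) := by
  by_cases hc : IsCyclic Q
  · exact Or.inl ⟨h ▸ (zmodCyclicMulEquiv hc).symm⟩
  have : Finite Q := Nat.finite_of_card_ne_zero (by omega)
  have : Nontrivial Q := Finite.one_lt_card_iff_nontrivial.mp (by omega)
  have hexp : Monoid.exponent Q = 2 :=
    (Monoid.exponent_eq_prime_iff Nat.prime_two).mpr fun g hg => by
      have hdvd : orderOf g ∣ 4 := h ▸ orderOf_dvd_natCard g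
      have h1 : orderOf g ≠ 1 := mt orderOf_eq_one_iff.mp hg
      have h4 : orderOf g ≠ 4 := fun h4 => hc (isCyclic_of_orderOf_eq_card g (h4.trans h.symm))
      have := Nat.le_of_dvd (by norm_num) hdvd
      interval_cases orderOf g <;> omega
  have : IsKleinFour Q := ⟨h, hexp⟩
  exact Or.inr IsKleinFour.nonempty_mulEquiv

theorem exists_normal_index_eq_four_of_card_eq_eight {Q : Type*} [Group Q]
    (h : Nat.card Q = 8) : ∃ N : Subgroup Q, N.Normal ∧ N.index = 4 := by
  have : Fact (Nat.Prime 2) := ⟨Nat.prime_two⟩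
  have : Finite Q := Nat.finite_of_card_ne_zero (by omega)
  have : Nontrivial Q := Finite.one_lt_card_iff_nontrivial.mp (by omega)
  obtain ⟨N, hN, hN2⟩ :=
    (IsPGroup.of_card (p := 2) (n := 3) (by rw [h]; norm_num)).exists_normal_card_eq_prime
  refine ⟨N, hN, ?_⟩
  have := N.card_mul_index
  rw [hN2, h] at this
  omega

theorem exists_normal_index_eq_four_or_three_of_card_eq_twelve {Q : Type*} [Group Q]
    (h : Nat.card Q = 12) :
    (∃ N : Subgroup Q, N.Normal ∧ N.index = 4) ∨ ∃ N : Subgroup Q, N.Normal ∧ N.index = 3 := by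
  have : Fact (Nat.Prime 3) := ⟨Nat.prime_three⟩
  have : Finite Q := Nat.finite_of_card_ne_zero (by omega)
  obtain ⟨P⟩ : Nonempty (Sylow 3 Q) := inferInstance
  have hP : Nat.card P = 3 := by
    rw [P.card_eq_multiplicity, h, show 12 = 3 * 4 by rfl, Nat.factorization_mul (by norm_num)
      (by norm_num), Finsupp.add_apply, Nat.prime_three.factorization_self,
      Nat.factorization_eq_zero_of_not_dvd (by norm_num)]
    norm_num
  have hPi : (P : Subgroup Q).index = 4 := by
    have := (P : Subgroup Q).card_mul_index
    rw [hP, h] at this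
    omega
  set N := normalizer ((P : Subgroup Q) : Set Q)
  have hdvd : N.index ∣ 4 := hPi ▸ index_dvd_of_le le_normalizer
  have hmod : N.index % 3 = 1 := P.card_eq_index_normalizer ▸ card_sylow_modEq_one 3 Q
  have : N.index = 1 ∨ N.index = 4 := by
    generalize N.index = n at hdvd hmod ⊢
    have := Nat.le_of_dvd (by norm_num) hdvd
    interval_cases n <;> omega
  rcases this with h1 | h4
  · exact Or.inl ⟨P, normalizer_eq_top_iff.mp (index_eq_one.mp h1), hPi⟩
  · have : IsCyclic P := isCyclic_of_prime_card hP
    have hN : N = P := by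
      refine le_antisymm (relIndex_eq_one.mp ?_) le_normalizer
      have := relIndex_mul_index (le_normalizer : (P : Subgroup Q) ≤ N)
      rw [h4, hPi] at this
      exact (Nat.mul_eq_right (by norm_num)).mp this
    exact Or.inr (hP ▸ P.exists_normal_index_eq_card_of_normalizer_eq hN)

theorem Subgroup.exists_normal_index_eq_four_or_three_or_eq_top {α : Type*}
    (hα : Nat.card α = 4) (Q : Subgroup (Equiv.Perm α)) (hQ : 4 ∣ Nat.card Q) :
    (∃ N : Subgroup Q, N.Normal ∧ N.index = 4) ∨ (∃ N : Subgroup Q, N.Normal ∧ N.index = 3) ∨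
      Q = ⊤ := by
  have : Finite α := Nat.finite_of_card_ne_zero (by omega)
  have hdvd : Nat.card Q ∣ 24 := by
    simpa [Nat.card_perm, hα, Nat.factorial] using Q.card_subgroup_dvd_card
  obtain h | h | h | h :
      Nat.card Q = 4 ∨ Nat.card Q = 8 ∨ Nat.card Q = 12 ∨ Nat.card Q = 24 := by
    have := Nat.le_of_dvd (by norm_num) hdvd
    interval_cases Nat.card Q <;> omega
  · exact Or.inl ⟨⊥, inferInstance, by rw [index_bot, h]⟩
  · exact Or.inl (exists_normal_index_eq_four_of_card_eq_eight h)
  · exact (exists_normal_index_eq_four_or_three_of_card_eq_twelve h).imp_right Or.inl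
  · exact Or.inr (Or.inr (Q.eq_top_of_card_eq (by rw [h, Nat.card_perm, hα]; rfl)))

theorem exists_quotient_mulEquiv_zmod_six {G : Type*} [Group G] {H M : Subgroup G} [M.Normal]
    (hH : H.index = 2) (hM : M.index = 3) :
    ∃ N : Subgroup G, ∃ _h : N.Normal, Nonempty (G ⧸ N ≃* Multiplicative (ZMod 6)) := by
  have : H.Normal := normal_of_index_eq_two hH
  have : Fact (Nat.Prime 2) := ⟨Nat.prime_two⟩
  have : Fact (Nat.Prime 3) := ⟨Nat.prime_three⟩
  rw [index_eq_card] at hH hM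
  have : Finite (G ⧸ H) := Nat.finite_of_card_ne_zero (by omega)
  have : Finite (G ⧸ M) := Nat.finite_of_card_ne_zero (by omega)
  have hcop : (Nat.card (G ⧸ H)).Coprime (Nat.card (G ⧸ M)) := by rw [hH, hM]; norm_num
  have hcyc : IsCyclic ((G ⧸ H) × (G ⧸ M)) :=
    Group.isCyclic_prod_iff.mpr ⟨isCyclic_of_prime_card hH, isCyclic_of_prime_card hM, hcop⟩
  have hcard : Nat.card ((G ⧸ H) × (G ⧸ M)) = 6 := by rw [Nat.card_prod, hH, hM]
  exact exists_normal_quotient_mulEquiv_of_surjective _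
    (MonoidHom.prod_surjective_of_coprime (QuotientGroup.mk'_surjective H)
      (QuotientGroup.mk'_surjective M) hcop)
    (hcard ▸ zmodCyclicMulEquiv hcyc).symm

theorem Subgroup.index_dvd_card_range_toPermHom {G : Type*} [Group G] (H : Subgroup G) :
    H.index ∣ Nat.card (MulAction.toPermHom G (G ⧸ H)).range := by
  rw [← index_ker, ← normalCore_eq_ker]
  exact index_dvd_of_le (normalCore_le H)

/-- Theorem 8.6(c): a finite CLT group whose order is divisible by `4` has a quotient
isomorphic to `C₄`, `C₂ × C₂`, `C₆`, or `S₄`. -/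
theorem CLT_four_dvd_quotient (G : Type*) [Group G] [Finite G]
    (hclt : IsCLT G) (h4 : 4 ∣ Nat.card G) :
    ∃ N : Subgroup G, ∃ _h : N.Normal,
      Nonempty ((G ⧸ N) ≃* Multiplicative (ZMod 4)) ∨
      Nonempty ((G ⧸ N) ≃* Multiplicative (ZMod 2 × ZMod 2)) ∨
      Nonempty ((G ⧸ N) ≃* Multiplicative (ZMod 6)) ∨
      Nonempty ((G ⧸ N) ≃* Equiv.Perm (Fin 4)) := by
  obtain ⟨K, hK⟩ := hclt.exists_index_eq h4
  set φ := MulAction.toPermHom G (G ⧸ K)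
  have hφ : Surjective φ.rangeRestrict := φ.rangeRestrict_surjective
  have hcosets : Nat.card (G ⧸ K) = 4 := index_eq_card K ▸ hK
  rcases φ.range.exists_normal_index_eq_four_or_three_or_eq_top hcosets
      (hK ▸ K.index_dvd_card_range_toPermHom) with ⟨N, _, hN⟩ | ⟨M, _, hM⟩ | htop
  · refine ⟨N.comap φ.rangeRestrict, inferInstance,
      (nonempty_mulEquiv_of_card_eq_four ?_).imp_right Or.inl⟩
    rw [← index_eq_card, index_comap_of_surjective _ hφ, hN]
  · obtain ⟨H, hH⟩ := hclt.exists_index_eq (Nat.dvd_trans (by norm_num : 2 ∣ 4) h4)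
    obtain ⟨N, hN, e⟩ := exists_quotient_mulEquiv_zmod_six hH
      (by rw [index_comap_of_surjective _ hφ, hM] : (M.comap φ.rangeRestrict).index = 3)
    exact ⟨N, hN, Or.inr (Or.inr (Or.inl e))⟩
  · obtain ⟨N, hN, e⟩ := exists_normal_quotient_mulEquiv_of_surjective φ
      (MonoidHom.range_eq_top.mp htop) (Finite.equivFinOfCardEq hcosets).permCongrHom
    exact ⟨N, hN, Or.inr (Or.inr (Or.inr e))⟩
end

section
/- Every finite group of odd order that has a subgroup of index 5 has a normal subgroup of index 5. -/
/-!
The normal core `N` of a subgroup `H` of index `5` is the kernel of the action of `G` on `G ⧸ H`,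
so `[G : N]` is a multiple of `5` dividing `5! = 120`; being odd, it is `5` or `15`. In the second
case the Sylow `3`-subgroup of `G ⧸ N` is normal, since the number of Sylow `3`-subgroups divides
`5` and is `≡ 1 mod 3`, and its preimage in `G` is normal of index `5`.
-/

theorem Subgroup.index_normalCore_dvd_factorial {G : Type*} [Group G] (H : Subgroup G)
    [H.FiniteIndex] : H.normalCore.index ∣ H.index.factorial := by
  rw [normalCore_eq_ker, index_ker, index_eq_card, ← Nat.card_perm]
  exact Subgroup.card_subgroup_dvd_card _

namespace Sylow

variable {G : Type*} [Group G] {p : ℕ} [Fact p.Prime]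

theorem index_eq_of_card_eq_prime_mul [Finite G] {m : ℕ} (hG : Nat.card G = p * m)
    (hpm : ¬ p ∣ m) (P : Sylow p G) : (P : Subgroup G).index = m := by
  have hp : p.Prime := Fact.out
  have hP : Nat.card (P : Subgroup G) = p := by
    rw [P.card_eq_multiplicity, hG, Nat.factorization_mul hp.ne_zero (by rintro rfl; simp at hpm),
      Finsupp.add_apply, hp.factorization_self, Nat.factorization_eq_zero_of_not_dvd hpm, pow_one]
  have h := (P : Subgroup G).card_mul_index
  rw [hP, hG] at h
  exact Nat.eq_of_mul_eq_mul_left hp.pos h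

theorem normal_of_index_prime_of_not_modEq_one [Finite (Sylow p G)] {q : ℕ} (hq : q.Prime)
    (P : Sylow p G) (hP : (P : Subgroup G).index = q) (hqp : ¬ q ≡ 1 [MOD p]) :
    (P : Subgroup G).Normal := by
  have hcard : Nat.card (Sylow p G) = 1 := by
    rcases (Nat.dvd_prime hq).1 (hP ▸ P.card_dvd_index) with h | h
    · exact h
    · exact absurd (h ▸ card_sylow_modEq_one p G) hqp
  have : Subsingleton (Sylow p G) := (Nat.card_eq_one_iff_unique.1 hcard).1
  exact P.normal_of_subsingleton

end Sylow

theorem exists_normal_index_eq_of_card_eq_prime_mul_prime {G : Type*} [Group G] [Finite G]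
    {p q : ℕ} [Fact p.Prime] (hq : q.Prime) (hG : Nat.card G = p * q) (hpq : ¬ p ∣ q)
    (hqp : ¬ q ≡ 1 [MOD p]) : ∃ N : Subgroup G, N.Normal ∧ N.index = q := by
  obtain ⟨P⟩ : Nonempty (Sylow p G) := inferInstance
  have hP := P.index_eq_of_card_eq_prime_mul hG hpq
  exact ⟨P, P.normal_of_index_prime_of_not_modEq_one hq hP hqp, hP⟩

theorem eq_five_or_eq_fifteen_of_dvd_120 {n : ℕ} (hn : Odd n) (h5 : 5 ∣ n) (h120 : n ∣ 120) :
    n = 5 ∨ n = 15 := by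
  obtain ⟨k, rfl⟩ := h5
  have hk24 : k ∣ 3 * 8 := Nat.dvd_of_mul_dvd_mul_left (by norm_num) h120
  have hk_odd : Odd k := hn.of_dvd_nat (dvd_mul_left k 5)
  have hk3 : k ∣ 3 := (hk_odd.coprime_two_right.pow_right 3).dvd_of_dvd_mul_right hk24
  rcases (Nat.dvd_prime Nat.prime_three).1 hk3 with rfl | rfl <;> simp

/-- Every finite group of odd order that has a subgroup of index `5` has a normal
subgroup of index `5`. -/
theorem odd_order_index_five_normal (G : Type*) [Group G] [Finite G]
    (hodd : Odd (Nat.card G)) (h : ∃ H : Subgroup G, H.index = 5) :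
    ∃ N : Subgroup G, N.Normal ∧ N.index = 5 := by
  obtain ⟨H, hH⟩ := h
  have : H.FiniteIndex := ⟨by rw [hH]; norm_num⟩
  set N := H.normalCore
  have h5 : 5 ∣ N.index := hH ▸ Subgroup.index_dvd_of_le H.normalCore_le
  have h120 : N.index ∣ 120 := by
    simpa [hH, Nat.factorial] using H.index_normalCore_dvd_factorial
  rcases eq_five_or_eq_fifteen_of_dvd_120 (hodd.of_dvd_nat N.index_dvd_card) h5 h120 with hN | hN
  · exact ⟨N, H.normalCore_normal, hN⟩
  · have : Fact (Nat.Prime 3) := ⟨Nat.prime_three⟩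
    have hQ : Nat.card (G ⧸ N) = 3 * 5 := by rw [← Subgroup.index_eq_card, hN]
    obtain ⟨M, hM, hMi⟩ :=
      exists_normal_index_eq_of_card_eq_prime_mul_prime Nat.prime_five hQ (by decide) (by decide)
    refine ⟨M.comap (QuotientGroup.mk' N), hM.comap _, ?_⟩
    rw [Subgroup.index_comap_of_surjective _ (QuotientGroup.mk'_surjective N), hMi]
end

section
/- Let G be a finite group of odd order with 5 dividing |G| that is a quotient of the von Dyck group D(3,3,5). Then G is not a CLT group. -/
/-- Theorem 8.2 (first step): a finite group of odd order divisible by `5` that is a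
quotient of the von Dyck group `D(3,3,5)` is not a CLT group. -/
theorem dyck_335_odd_not_CLT (G : Type*) [Group G] [Finite G]
    (hodd : Odd (Nat.card G)) (h5 : 5 ∣ Nat.card G)
    (f : DyckGroup 3 3 5 →* G) (hf : Function.Surjective f) :
    ¬ IsCLT G := by
  intro hCLT
  classical
  have hG0 : Nat.card G ≠ 0 := Nat.card_pos.ne'
  obtain ⟨t, ht⟩ := h5
  have ht0 : t ≠ 0 := by rintro rfl; omega
  obtain ⟨H, hH⟩ := hCLT t ⟨5, by omega⟩
  -- H has index 5
  have hidx : H.index = 5 := by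
    have h1 := H.index_mul_card
    rw [hH] at h1
    have : H.index * t = 5 * t := by omega
    exact Nat.eq_of_mul_eq_mul_right (Nat.pos_of_ne_zero ht0) this
  set K := H.normalCore with hK
  have hKle : K ≤ H := H.normalCore_le
  have h5n : 5 ∣ K.index := hidx ▸ Subgroup.index_dvd_of_le hKle
  have hndvd : K.index ∣ Nat.card G := Subgroup.index_dvd_card K
  have hm2 : Nat.card G % 2 = 1 := Nat.odd_iff.mp hodd
  have hnodd : ¬ 2 ∣ K.index := by
    intro h
    have := h.trans hndvd
    omega
  -- K.index divides 120 via the action on the 5 cosets of H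
  have h120 : K.index ∣ 120 := by
    have hker : K = (MulAction.toPermHom G (G ⧸ H)).ker := H.normalCore_eq_ker
    rw [hker, Subgroup.index_ker]
    have hcard5 : Nat.card (G ⧸ H) = 5 := by rw [← Subgroup.index_eq_card, hidx]
    have hdvd : Nat.card (MulAction.toPermHom G (G ⧸ H)).range ∣
        Nat.card (Equiv.Perm (G ⧸ H)) := Subgroup.card_subgroup_dvd_card _
    have hperm : Nat.card (Equiv.Perm (G ⧸ H)) = 120 := by
      letI : Fintype (G ⧸ H) := Fintype.ofFinite _
      rw [Nat.card_eq_fintype_card, Fintype.card_perm, ← Nat.card_eq_fintype_card, hcard5]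
      norm_num [Nat.factorial]
    rwa [hperm] at hdvd
  -- K.index divides 15
  have h15 : K.index ∣ 15 := by
    have hcop : (K.index).Coprime 8 := by
      have h2 : (K.index).Coprime 2 :=
        ((Nat.Prime.coprime_iff_not_dvd Nat.prime_two).mpr hnodd).symm
      have := h2.pow_right 3
      norm_num at this
      exact this
    refine hcop.dvd_of_dvd_mul_left ?_
    have : (8 : ℕ) * 15 = 120 := by norm_num
    rwa [this]
  -- hence K.index = 5 or 15
  have hn : K.index = 5 ∨ K.index = 15 := by
    obtain ⟨c, hc⟩ := h15
    obtain ⟨d, hd⟩ := h5n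
    have hdc : d * c = 3 := by
      have : 5 * (d * c) = 5 * 3 := by rw [← mul_assoc, ← hd, ← hc]
      omega
    have hd3 : d ≤ 3 := Nat.le_of_dvd (by norm_num) ⟨c, hdc.symm⟩
    have hd1 : 1 ≤ d := by
      rcases Nat.eq_zero_or_pos d with h | h
      · omega
      · omega
    interval_cases d <;> omega
  -- Sylow 3-subgroup of G ⧸ K has index 5
  haveI hf3 : Fact (Nat.Prime 3) := ⟨by norm_num⟩
  obtain ⟨P⟩ : Nonempty (Sylow 3 (G ⧸ K)) := Sylow.nonempty
  have hcardQ : Nat.card (G ⧸ K) = K.index := (Subgroup.index_eq_card K).symm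
  obtain ⟨k, hk⟩ := IsPGroup.iff_card.mp P.isPGroup'
  have hPdvd : Nat.card P ∣ Nat.card (G ⧸ K) :=
    Subgroup.card_subgroup_dvd_card (P : Subgroup (G ⧸ K))
  have hPidx : (P : Subgroup (G ⧸ K)).index = 5 := by
    have hmul := (P : Subgroup (G ⧸ K)).index_mul_card
    rcases hn with h | h
    · -- card P is a power of 3 dividing 5, so card P = 1
      have hcP : Nat.card P = 1 := by
        rw [hcardQ, h] at hPdvd
        rw [hk] at hPdvd ⊢
        rcases Nat.eq_zero_or_pos k with rfl | hkpos
        · norm_num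
        · exfalso
          have : (3 : ℕ) ∣ 5 := dvd_trans (dvd_pow_self 3 hkpos.ne') hPdvd
          norm_num at this
      rw [hcP, mul_one, hcardQ, h] at hmul
      exact hmul
    · -- card P = 3
      have h3P : (3 : ℕ) ∣ Nat.card P := by
        have : (3 : ℕ) ^ 1 ∣ Nat.card (G ⧸ K) := by rw [hcardQ, h]; norm_num
        simpa using P.pow_dvd_card_of_pow_dvd_card this
      have hcP : Nat.card P = 3 := by
        rw [hcardQ, h] at hPdvd
        rw [hk] at hPdvd h3P ⊢
        have hk1 : k = 1 := by
          rcases Nat.eq_zero_or_pos k with rfl | hkpos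
          · norm_num at h3P
          · by_contra hne
            have hk2 : 2 ≤ k := by omega
            have : (9 : ℕ) ∣ 15 := by
              calc (9 : ℕ) = 3 ^ 2 := by norm_num
              _ ∣ 3 ^ k := pow_dvd_pow 3 hk2
              _ ∣ 15 := hPdvd
            norm_num at this
        rw [hk1, pow_one]
      rw [hcP, hcardQ, h] at hmul
      omega
  -- the Sylow 3-subgroup is unique, hence normal
  have hnum : Nat.card (Sylow 3 (G ⧸ K)) = 1 := by
    have hd : Nat.card (Sylow 3 (G ⧸ K)) ∣ 5 := hPidx ▸ P.card_dvd_index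
    have hmod := card_sylow_modEq_one 3 (G ⧸ K)
    rcases ((by norm_num : Nat.Prime 5).eq_one_or_self_of_dvd _ hd) with h | h
    · exact h
    · exfalso
      rw [h] at hmod
      exact absurd hmod (by decide)
  haveI hPn : (P : Subgroup (G ⧸ K)).Normal := by
    have hni := Sylow.card_eq_index_normalizer P
    rw [hnum] at hni
    exact Subgroup.normalizer_eq_top_iff.mp (Subgroup.index_eq_one.mp hni.symm)
  -- the abelian quotient A of order 5
  set A := (G ⧸ K) ⧸ (P : Subgroup (G ⧸ K)) with hA
  have hcardA : Nat.card A = 5 := by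
    rw [← Subgroup.index_eq_card, hPidx]
  haveI : Fact (Nat.Prime 5) := ⟨by norm_num⟩
  have hcyc : IsCyclic A := isCyclic_of_prime_card hcardA
  have hcomm : ∀ x y : A, x * y = y * x := by
    letI : CommGroup A := IsCyclic.commGroup
    exact fun x y => mul_comm x y
  -- the composite surjection from the free group
  set ψ : FreeGroup (Fin 2) →* A :=
    (((QuotientGroup.mk' (P : Subgroup (G ⧸ K))).comp (QuotientGroup.mk' K)).comp f).comp
      (PresentedGroup.mk (dyckRels 3 3 5)) with hψ
  have hψs : Function.Surjective ψ := by
    rw [hψ]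
    simp only [MonoidHom.coe_comp]
    exact (((QuotientGroup.mk'_surjective _).comp
      (QuotientGroup.mk'_surjective _)).comp hf).comp (PresentedGroup.mk_surjective _)
  have hrel : ∀ r ∈ dyckRels 3 3 5, ψ r = 1 := by
    intro r hr
    have h1 : PresentedGroup.mk (dyckRels 3 3 5) r = 1 :=
      (QuotientGroup.eq_one_iff r).mpr (Subgroup.subset_normalClosure hr)
    rw [hψ]
    simp only [MonoidHom.comp_apply, h1, map_one]
  set a : A := ψ (FreeGroup.of 0) with ha'
  set b : A := ψ (FreeGroup.of 1) with hb'
  have ha3 : a ^ 3 = 1 := by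
    have := hrel _ (show FreeGroup.of 0 ^ 3 ∈ dyckRels 3 3 5 from Set.mem_insert _ _)
    rwa [map_pow] at this
  have hb3 : b ^ 3 = 1 := by
    have := hrel _ (show FreeGroup.of 1 ^ 3 ∈ dyckRels 3 3 5 from
      Set.mem_insert_of_mem _ (Set.mem_insert _ _))
    rwa [map_pow] at this
  have hab5 : (a * b) ^ 5 = 1 := by
    have := hrel _ (show (FreeGroup.of 0 * FreeGroup.of 1) ^ 5 ∈ dyckRels 3 3 5 from
      Set.mem_insert_of_mem _ (Set.mem_insert_of_mem _ rfl))
    rwa [map_pow, map_mul] at this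
  -- from the relations, a * b = 1
  have hab3 : (a * b) ^ 3 = 1 := by
    rw [(Commute.mul_pow (hcomm a b) 3 : (a * b) ^ 3 = a ^ 3 * b ^ 3), ha3, hb3, one_mul]
  have hab1 : a * b = 1 := by
    have h2 : (a * b) ^ 2 = 1 := by
      have : (a * b) ^ 5 = (a * b) ^ 3 * (a * b) ^ 2 := by rw [← pow_add]
      rw [hab5, hab3, one_mul] at this
      exact this.symm
    have : (a * b) ^ 3 = (a * b) ^ 2 * (a * b) := by rw [← pow_succ]
    rw [hab3, h2, one_mul] at this
    exact this.symm
  have hb : b = a⁻¹ := eq_inv_of_mul_eq_one_right hab1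
  -- A is generated by a, so its order divides 3
  have hmem : ∀ q : A, q ∈ Subgroup.zpowers a := by
    have hle : Subgroup.map ψ ⊤ ≤ Subgroup.zpowers a := by
      rw [← FreeGroup.closure_range_of (Fin 2), MonoidHom.map_closure, Subgroup.closure_le]
      rintro q ⟨x, ⟨i, rfl⟩, rfl⟩
      fin_cases i
      · exact Subgroup.mem_zpowers a
      · show ψ (FreeGroup.of 1) ∈ Subgroup.zpowers a
        rw [← hb', hb]
        exact Subgroup.inv_mem _ (Subgroup.mem_zpowers a)
    intro q
    obtain ⟨x, rfl⟩ := hψs q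
    exact hle ⟨x, Subgroup.mem_top x, rfl⟩
  have hord : orderOf a = Nat.card A := orderOf_eq_card_of_forall_mem_zpowers hmem
  have hdvd3 : orderOf a ∣ 3 := orderOf_dvd_of_pow_eq_one ha3
  rw [hord, hcardA] at hdvd3
  norm_num at hdvd3
end
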